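/- arXiv:2309.02613 — 6 statements merged into one kernel-verified Lean document; each statement's English description precedes it below -/
import Mathlib

section
/- For the Independent Markets mechanism A, for every ε ∈ (0,1) and every n ≥ 2, there exist m ∈ ℕ and a preference profile P on n voters and m projects such that P̄_1 − A(P)_1 ≥ (1 − ε)·(n−1)/n. Consequently, for any ε > 0 there is no function α satisfying lim_{m→∞} α(n,m) ≤ (1 − ε)(n−1)/n such that the Independent Markets mechanism underfunds by at most α. -/
open Finset

/-- With the convention used here, for a multiset of `2n+1` real numbers,
`med n s` is the `(n+1)`-st smallest element, i.e. the median. -/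
noncomputable def med (n : ℕ) (s : Multiset ℝ) : ℝ :=
  (s.sort (· ≤ ·)).getD n 0

/-- The median of the `n+1` phantom values `phantoms 0, …, phantoms n`
together with the `n` votes. -/
noncomputable def projMed (n : ℕ) (phantoms : ℕ → ℝ) (votes : Fin n → ℝ) : ℝ :=
  med n ((Multiset.range (n + 1)).map phantoms + Finset.univ.val.map votes)

/-- `P` is a preference profile: every entry lies in `[0,1]` and every row
lies in the standard simplex. -/
def IsProfile {n m : ℕ} (P : Fin n → Fin m → ℝ) : Prop :=
  (∀ i j, P i j ∈ Set.Icc (0 : ℝ) 1) ∧ ∀ i, ∑ j, P i j = 1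

/-- The mean funding of project `j` in profile `P`. -/
noncomputable def mean {n m : ℕ} (P : Fin n → Fin m → ℝ) (j : Fin m) : ℝ :=
  (∑ i, P i j) / (n : ℝ)

/-- `t` is a normalization point for the phantoms `f 0, …, f n` and profile `P`. -/
def IsNormPoint {n m : ℕ} (f : ℕ → ℝ → ℝ) (P : Fin n → Fin m → ℝ) (t : ℝ) : Prop :=
  t ∈ Set.Icc (0 : ℝ) 1 ∧
    ∑ j, projMed n (fun k => f k t) (fun i => P i j) = 1

/-- The output of the moving phantom mechanism with phantoms `f` on profile `P`,
evaluated at (normalization) point `t`, for project `j`. -/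
noncomputable def output {n m : ℕ} (f : ℕ → ℝ → ℝ) (P : Fin n → Fin m → ℝ)
    (t : ℝ) (j : Fin m) : ℝ :=
  projMed n (fun k => f k t) (fun i => P i j)

/-- `f 0, …, f n` is a phantom system for `n` voters. -/
structure IsPhantomSystem (n : ℕ) (f : ℕ → ℝ → ℝ) : Prop where
  continuousOn : ∀ k ≤ n, ContinuousOn (f k) (Set.Icc 0 1)
  monotoneOn : ∀ k ≤ n, MonotoneOn (f k) (Set.Icc 0 1)
  mem_Icc : ∀ k ≤ n, ∀ t ∈ Set.Icc (0 : ℝ) 1, f k t ∈ Set.Icc (0 : ℝ) 1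
  map_zero : ∀ k ≤ n, f k 0 = 0
  map_one : ∀ k ≤ n, f k 1 = 1
  ordered : ∀ k l, k ≤ l → l ≤ n → ∀ t ∈ Set.Icc (0 : ℝ) 1, f l t ≤ f k t

/-- The phantom system of the Ladder mechanism for `n` voters. -/
noncomputable def ladder (n : ℕ) (k : ℕ) (t : ℝ) : ℝ :=
  max (t - (k : ℝ) / (n : ℝ)) 0

/-- The phantom system of the Independent Markets mechanism for `n` voters. -/
noncomputable def indMarkets (n : ℕ) (k : ℕ) (t : ℝ) : ℝ :=
  t * ((n : ℝ) - (k : ℝ)) / (n : ℝ)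

/-- The moving phantom mechanism given by the family `F` of phantom systems
overfunds by at most `α`. -/
def OverfundsByAtMost (F : ℕ → ℕ → ℝ → ℝ) (α : ℕ → ℕ → ℝ) : Prop :=
  ∀ n m : ℕ, 0 < n → 0 < m → ∀ P : Fin n → Fin m → ℝ, IsProfile P →
    ∀ t, IsNormPoint (F n) P t → ∀ j, output (F n) P t j - mean P j ≤ α n m

/-- The moving phantom mechanism given by the family `F` of phantom systems
underfunds by at most `α`. -/
def UnderfundsByAtMost (F : ℕ → ℕ → ℝ → ℝ) (α : ℕ → ℕ → ℝ) : Prop :=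
  ∀ n m : ℕ, 0 < n → 0 < m → ∀ P : Fin n → Fin m → ℝ, IsProfile P →
    ∀ t, IsNormPoint (F n) P t → ∀ j, mean P j - output (F n) P t j ≤ α n m

/-- The moving phantom mechanism given by the family `F` of phantom systems
is proportional: on profiles of single-minded voters it outputs the mean. -/
def Proportional (F : ℕ → ℕ → ℝ → ℝ) : Prop :=
  ∀ n m : ℕ, 0 < n → 0 < m → ∀ P : Fin n → Fin m → ℝ, IsProfile P →
    (∀ i j, P i j = 0 ∨ P i j = 1) →
    ∀ t, IsNormPoint (F n) P t → ∀ j, output (F n) P t j = mean P j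

/-- The moving phantom mechanism given by the family `F` of phantom systems
is zero-unanimous. -/
def ZeroUnanimous (F : ℕ → ℕ → ℝ → ℝ) : Prop :=
  ∀ n m : ℕ, 0 < n → 0 < m → ∀ P : Fin n → Fin m → ℝ, IsProfile P →
    ∀ j : Fin m, (∀ i, P i j = 0) →
      ∀ t, IsNormPoint (F n) P t → output (F n) P t j = 0

lemma med_le_of_count {n : ℕ} {s : Multiset ℝ} (hcard : Multiset.card s = 2*n+1) {a : ℝ}
    (h : n+1 ≤ Multiset.countP (fun x => x ≤ a) s) : med n s ≤ a := by
  classical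
  by_contra hlt
  push_neg at hlt
  set l := s.sort (· ≤ ·) with hl
  have hlen : l.length = 2*n+1 := by rw [hl, Multiset.length_sort, hcard]
  have hst : l.Pairwise (· ≤ ·) := Multiset.pairwise_sort _ _
  have hn : n < l.length := by omega
  have hmed : med n s = l.get ⟨n, hn⟩ := by
    rw [med, ← hl, List.getD_eq_getElem l 0 hn]; rfl
  have hcnt : Multiset.countP (fun x => x ≤ a) s = l.countP (fun x => decide (x ≤ a)) := by
    conv_lhs => rw [← Multiset.sort_eq s (· ≤ ·)]
    rw [← hl, Multiset.coe_countP]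
  rw [hcnt] at h
  have hsplit : l.countP (fun x => decide (x ≤ a)) =
      (l.take n).countP (fun x => decide (x ≤ a)) + (l.drop n).countP (fun x => decide (x ≤ a)) := by
    rw [← List.countP_append, List.take_append_drop]
  have h1 : (l.take n).countP (fun x => decide (x ≤ a)) ≤ n := by
    calc (l.take n).countP _ ≤ (l.take n).length := List.countP_le_length
    _ ≤ n := by simp
  have h2 : (l.drop n).countP (fun x => decide (x ≤ a)) = 0 := by
    rw [List.countP_eq_zero]
    intro x hx
    obtain ⟨i, hi, rfl⟩ := List.mem_iff_get.mp hx
    have hni : n + i.1 < l.length := by have := i.2; simp at this; omega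
    have hgd : (l.drop n).get i = l.get ⟨n + i.1, hni⟩ := by
      simp
    have hle : l.get ⟨n, hn⟩ ≤ l.get ⟨n + i.1, hni⟩ :=
      List.Pairwise.rel_get_of_le hst (by simp)
    rw [hgd]
    simp only [decide_eq_true_eq]
    intro hxa
    rw [hmed] at hlt
    exact absurd (le_trans hle hxa) (not_le.mpr hlt)
  omega

lemma le_med_of_count {n : ℕ} {s : Multiset ℝ} (hcard : Multiset.card s = 2*n+1) {a : ℝ}
    (h : n+1 ≤ Multiset.countP (fun x => a ≤ x) s) : a ≤ med n s := by
  classical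
  by_contra hlt
  push_neg at hlt
  set l := s.sort (· ≤ ·) with hl
  have hlen : l.length = 2*n+1 := by rw [hl, Multiset.length_sort, hcard]
  have hst : l.Pairwise (· ≤ ·) := Multiset.pairwise_sort _ _
  have hn : n < l.length := by omega
  have hmed : med n s = l.get ⟨n, hn⟩ := by
    rw [med, ← hl, List.getD_eq_getElem l 0 hn]; rfl
  have hcnt : Multiset.countP (fun x => a ≤ x) s = l.countP (fun x => decide (a ≤ x)) := by
    conv_lhs => rw [← Multiset.sort_eq s (· ≤ ·)]
    rw [← hl, Multiset.coe_countP]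
  rw [hcnt] at h
  have hsplit : l.countP (fun x => decide (a ≤ x)) =
      (l.take (n+1)).countP (fun x => decide (a ≤ x)) + (l.drop (n+1)).countP (fun x => decide (a ≤ x)) := by
    rw [← List.countP_append, List.take_append_drop]
  have h1 : (l.drop (n+1)).countP (fun x => decide (a ≤ x)) ≤ n := by
    calc (l.drop (n+1)).countP _ ≤ (l.drop (n+1)).length := List.countP_le_length
    _ ≤ n := by simp [hlen]; omega
  have h2 : (l.take (n+1)).countP (fun x => decide (a ≤ x)) = 0 := by
    rw [List.countP_eq_zero]
    intro x hx
    obtain ⟨i, hi, rfl⟩ := List.mem_iff_get.mp hx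
    have hil : i.1 < l.length := by have := i.2; simp at this; omega
    have hgd : (l.take (n+1)).get i = l.get ⟨i.1, hil⟩ := by
      simp
    have hile : i.1 ≤ n := by have := i.2; simp at this; omega
    have hle : l.get ⟨i.1, hil⟩ ≤ l.get ⟨n, hn⟩ :=
      List.Pairwise.rel_get_of_le hst (by simp [hile])
    rw [hgd]
    simp only [decide_eq_true_eq]
    intro hxa
    rw [hmed] at hlt
    exact absurd (le_trans hxa hle) (not_le.mpr hlt)
  omega

lemma card_S (n : ℕ) (f : ℕ → ℝ) (votes : Fin n → ℝ) :
    Multiset.card ((Multiset.range (n+1)).map f + Finset.univ.val.map votes) = 2*n+1 := by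
  simp [Multiset.card_add]; omega

lemma ph_le (n k : ℕ) (hn : 1 ≤ n) {t : ℝ} (ht : 0 ≤ t) :
    indMarkets n k t ≤ t := by
  unfold indMarkets
  have hn' : (0:ℝ) < n := by exact_mod_cast Nat.pos_of_ne_zero (by omega)
  rw [div_le_iff₀ hn']
  have : (0:ℝ) ≤ (k:ℝ) := Nat.cast_nonneg k
  nlinarith

lemma ph_ge (n k : ℕ) (hk : k + 1 ≤ n) {t : ℝ} (ht : 0 ≤ t) :
    t / n ≤ indMarkets n k t := by
  unfold indMarkets
  have hn' : (0:ℝ) < n := by exact_mod_cast Nat.pos_of_ne_zero (by omega)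
  have hc : (k:ℝ) + 1 ≤ (n:ℝ) := by exact_mod_cast hk
  rw [div_le_div_iff₀ hn' hn']
  nlinarith [mul_nonneg (mul_nonneg ht hn'.le) (show (0:ℝ) ≤ (n:ℝ)-(k:ℝ)-1 by linarith)]

lemma ph_zero (n : ℕ) (t : ℝ) : indMarkets n n t = 0 := by
  unfold indMarkets; ring

lemma ph_top (n : ℕ) (hn : 1 ≤ n) (t : ℝ) : indMarkets n 0 t = t := by
  unfold indMarkets
  have hn' : (n:ℝ) ≠ 0 := by exact_mod_cast Nat.pos_of_ne_zero (by omega) |>.ne'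
  field_simp
  simp

lemma projMed_le (n : ℕ) (hn : 1 ≤ n) {t : ℝ} (ht : 0 ≤ t) (votes : Fin n → ℝ) :
    projMed n (fun k => indMarkets n k t) votes ≤ t := by
  apply med_le_of_count (card_S n _ votes)
  rw [Multiset.countP_add]
  have hA : Multiset.countP (fun x => x ≤ t) ((Multiset.range (n+1)).map (fun k => indMarkets n k t)) = n+1 := by
    rw [Multiset.countP_eq_card.mpr, Multiset.card_map, Multiset.card_range]
    intro x hx
    obtain ⟨k, hk, rfl⟩ := Multiset.mem_map.mp hx
    exact ph_le n k hn ht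
  omega

lemma le_projMed (n : ℕ) (hn : 1 ≤ n) {t c : ℝ} (ht : 0 ≤ t) (hc : c ≤ t / n)
    (votes : Fin n → ℝ) (i₀ : Fin n) (hv : c ≤ votes i₀) :
    c ≤ projMed n (fun k => indMarkets n k t) votes := by
  apply le_med_of_count (card_S n _ votes)
  rw [Multiset.countP_add]
  have hA : n ≤ Multiset.countP (fun x => c ≤ x) ((Multiset.range (n+1)).map (fun k => indMarkets n k t)) := by
    rw [Multiset.range_succ, Multiset.map_cons, Multiset.countP_cons]
    have : Multiset.countP (fun x => c ≤ x) ((Multiset.range n).map (fun k => indMarkets n k t)) = n := by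
      rw [Multiset.countP_eq_card.mpr, Multiset.card_map, Multiset.card_range]
      intro x hx
      obtain ⟨k, hk, rfl⟩ := Multiset.mem_map.mp hx
      exact le_trans hc (ph_ge n k (by simpa using Multiset.mem_range.mp hk) ht)
    omega
  have hB : 0 < Multiset.countP (fun x => c ≤ x) (Finset.univ.val.map votes) := by
    rw [Multiset.countP_pos]
    exact ⟨votes i₀, Multiset.mem_map.mpr ⟨i₀, by simp, rfl⟩, hv⟩
  omega

lemma projMed_const (n : ℕ) (hn : 1 ≤ n) {t p : ℝ} (ht : 0 ≤ t) (htp : t ≤ p)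
    (votes : Fin n → ℝ) (hv : ∀ i, votes i = p) :
    projMed n (fun k => indMarkets n k t) votes = t := by
  refine le_antisymm (projMed_le n hn ht votes) ?_
  apply le_med_of_count (card_S n _ votes)
  rw [Multiset.countP_add]
  have hB : Multiset.countP (fun x => t ≤ x) (Finset.univ.val.map votes) = n := by
    rw [Multiset.countP_eq_card.mpr]
    · simp
    · intro x hx
      obtain ⟨i, hi, rfl⟩ := Multiset.mem_map.mp hx
      rw [hv i]; exact htp
  have hA : 0 < Multiset.countP (fun x => t ≤ x) ((Multiset.range (n+1)).map (fun k => indMarkets n k t)) := by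
    rw [Multiset.countP_pos]
    refine ⟨indMarkets n 0 t, Multiset.mem_map.mpr ⟨0, Multiset.mem_range.mpr (by omega), rfl⟩, ?_⟩
    rw [ph_top n hn]
  omega

lemma projMed_single (n : ℕ) (hn : 2 ≤ n) {t c : ℝ} (ht : 0 ≤ t) (hc : t / n ≤ c)
    (votes : Fin n → ℝ) (i₀ : Fin n) (hv : votes i₀ = c) (hz : ∀ i, i ≠ i₀ → votes i = 0) :
    projMed n (fun k => indMarkets n k t) votes = t / n := by
  have hn0 : (0:ℝ) < n := by exact_mod_cast Nat.pos_of_ne_zero (by omega)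
  have htn : 0 ≤ t / n := by positivity
  refine le_antisymm ?_ (le_projMed n (by omega) ht le_rfl votes i₀ (hv ▸ hc))
  apply med_le_of_count (card_S n _ votes)
  rw [Multiset.countP_add]
  have hB : n - 1 ≤ Multiset.countP (fun x => x ≤ t / n) (Finset.univ.val.map votes) := by
    rw [Multiset.countP_map]
    have : (Finset.univ.erase i₀) ⊆ Finset.univ.filter (fun i => votes i ≤ t / n) := by
      intro i hi
      rw [Finset.mem_filter]
      refine ⟨Finset.mem_univ _, ?_⟩
      rw [hz i (Finset.ne_of_mem_erase hi)]
      exact htn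
    have hcard := Finset.card_le_card this
    rw [Finset.card_erase_of_mem (Finset.mem_univ _), Finset.card_univ, Fintype.card_fin] at hcard
    calc n - 1 ≤ (Finset.univ.filter (fun i => votes i ≤ t / n)).card := hcard
    _ = Multiset.card (Multiset.filter (fun i => votes i ≤ t / n) Finset.univ.val) := rfl
  obtain ⟨n', rfl⟩ : ∃ n', n = n' + 2 := ⟨n - 2, by omega⟩
  have hA : 2 ≤ Multiset.countP (fun x => x ≤ t / (n'+2:ℕ))
      ((Multiset.range ((n'+2)+1)).map (fun k => indMarkets (n'+2) k t)) := by
    rw [Multiset.range_succ, Multiset.map_cons, Multiset.countP_cons]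
    rw [Multiset.range_succ, Multiset.map_cons, Multiset.countP_cons]
    have h1 : indMarkets (n'+2) (n'+2) t ≤ t / ((n'+2:ℕ):ℝ) := by
      rw [ph_zero]; positivity
    have h2 : indMarkets (n'+2) (n'+1) t ≤ t / ((n'+2:ℕ):ℝ) := by
      unfold indMarkets
      have : ((n'+2:ℕ):ℝ) = (n':ℝ) + 2 := by push_cast; ring
      rw [this]
      have h2' : (0:ℝ) < (n':ℝ) + 2 := by positivity
      rw [div_le_div_iff₀ h2' h2']
      push_cast
      nlinarith
    simp only [if_pos h1, if_pos h2]
    omega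
  omega

noncomputable def Pc (n K : ℕ) : Fin n → Fin (n*K+1) → ℝ :=
  fun i j => if (j:ℕ) = 0 then ((n:ℝ)-1)/(n:ℝ)
    else if (i:ℕ)*K < (j:ℕ) ∧ (j:ℕ) ≤ ((i:ℕ)+1)*K then 1/((n:ℝ)*(K:ℝ)) else 0

lemma owner_lt (n K : ℕ) (hK : 1 ≤ K) (j : Fin (n*K)) : (j:ℕ)/K < n :=
  (Nat.div_lt_iff_lt_mul (by omega)).mpr j.isLt

lemma owner_cond (K : ℕ) (hK : 1 ≤ K) (a : ℕ) : (a/K)*K < a+1 ∧ a+1 ≤ (a/K+1)*K := by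
  constructor
  · exact Nat.lt_succ_of_le (Nat.div_mul_le_self a K)
  · have e := Nat.div_add_mod a K
    have hm : a % K < K := Nat.mod_lt _ (by omega)
    have h2 : (a/K+1)*K = K*(a/K) + K := by ring
    rw [h2]; linarith

lemma cond_unique (K : ℕ) (hK : 1 ≤ K) (a i : ℕ) (h1 : i*K < a+1) (h2 : a+1 ≤ (i+1)*K) :
    a / K = i :=
  Nat.div_eq_of_lt_le (by omega) (by omega)

lemma Pc_zero (n K : ℕ) (i : Fin n) (j : Fin (n*K+1)) (hj : (j:ℕ) = 0) :
    Pc n K i j = ((n:ℝ)-1)/(n:ℝ) := by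
  simp [Pc, hj]

lemma Pc_succ_owner (n K : ℕ) (hK : 1 ≤ K) (j : Fin (n*K)) :
    Pc n K ⟨(j:ℕ)/K, owner_lt n K hK j⟩ j.succ = 1/((n:ℝ)*(K:ℝ)) := by
  unfold Pc
  rw [if_neg (by simp [Fin.val_succ]), if_pos]
  simpa [Fin.val_succ] using owner_cond K hK (j:ℕ)

lemma Pc_succ_other (n K : ℕ) (hK : 1 ≤ K) (j : Fin (n*K)) (i : Fin n)
    (hi : i ≠ ⟨(j:ℕ)/K, owner_lt n K hK j⟩) : Pc n K i j.succ = 0 := by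
  unfold Pc
  rw [if_neg (by simp [Fin.val_succ]), if_neg]
  rintro ⟨h1, h2⟩
  simp only [Fin.val_succ] at h1 h2
  exact hi (Fin.ext (cond_unique K hK (j:ℕ) (i:ℕ) h1 h2).symm)

lemma Pc_row (n K : ℕ) (hn : 2 ≤ n) (hK : 1 ≤ K) (i : Fin n) : ∑ j, Pc n K i j = 1 := by
  have hn0 : (0:ℝ) < n := by exact_mod_cast Nat.pos_of_ne_zero (by omega)
  have hK0 : (0:ℝ) < K := by exact_mod_cast Nat.pos_of_ne_zero (by omega)
  rw [Fin.sum_univ_succ, Pc_zero n K i 0 rfl]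
  have hrest : ∑ j : Fin (n*K), Pc n K i j.succ = (K:ℝ) * (1/((n:ℝ)*(K:ℝ))) := by
    have hg : ∀ j : Fin (n*K), Pc n K i j.succ =
        (fun a : ℕ => if (i:ℕ)*K < a+1 ∧ a+1 ≤ ((i:ℕ)+1)*K then 1/((n:ℝ)*(K:ℝ)) else 0) (j:ℕ) := by
      intro j
      unfold Pc
      rw [if_neg (by simp [Fin.val_succ])]
      simp [Fin.val_succ]
    rw [Finset.sum_congr rfl (fun j _ => hg j),
      Fin.sum_univ_eq_sum_range (fun a : ℕ => if (i:ℕ)*K < a+1 ∧ a+1 ≤ ((i:ℕ)+1)*K then 1/((n:ℝ)*(K:ℝ)) else 0) (n*K)]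
    rw [← Finset.sum_filter]
    have hfil : (Finset.range (n*K)).filter
        (fun a => (i:ℕ)*K < a+1 ∧ a+1 ≤ ((i:ℕ)+1)*K) = Finset.Ico ((i:ℕ)*K) ((i:ℕ)*K + K) := by
      have hle : (i:ℕ)*K + K ≤ n*K := by
        have : ((i:ℕ)+1)*K ≤ n*K := Nat.mul_le_mul_right K i.isLt
        linarith [this]
      ext a
      simp only [Finset.mem_filter, Finset.mem_range, Finset.mem_Ico]
      have hsm : ((i:ℕ)+1)*K = (i:ℕ)*K + K := by ring
      rw [hsm]
      constructor
      · rintro ⟨_, h1, h2⟩; omega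
      · rintro ⟨h1, h2⟩; omega
    rw [hfil, Finset.sum_const, Nat.card_Ico, Nat.add_sub_cancel_left, nsmul_eq_mul]
  rw [hrest]
  field_simp
  ring

lemma Pc_profile (n K : ℕ) (hn : 2 ≤ n) (hK : 1 ≤ K) : IsProfile (Pc n K) := by
  have hn0 : (0:ℝ) < n := by exact_mod_cast Nat.pos_of_ne_zero (by omega)
  have hK0 : (0:ℝ) < K := by exact_mod_cast Nat.pos_of_ne_zero (by omega)
  have hn2 : (2:ℝ) ≤ n := by exact_mod_cast hn
  have hK1 : (1:ℝ) ≤ K := by exact_mod_cast hK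
  constructor
  · intro i j
    unfold Pc
    split_ifs with h1 h2
    · exact ⟨div_nonneg (by linarith) hn0.le, by rw [div_le_one hn0]; linarith⟩
    · exact ⟨by positivity, by rw [div_le_one (by positivity)]; nlinarith⟩
    · simp
  · exact Pc_row n K hn hK


lemma Pc_mean0 (n K : ℕ) (hn : 2 ≤ n) (j : Fin (n*K+1)) (hj : (j:ℕ) = 0) :
    mean (Pc n K) j = ((n:ℝ)-1)/(n:ℝ) := by
  have hn0 : (0:ℝ) < n := by exact_mod_cast Nat.pos_of_ne_zero (by omega)
  unfold mean
  rw [Finset.sum_congr rfl (fun i _ => Pc_zero n K i j hj), Finset.sum_const,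
    Finset.card_univ, Fintype.card_fin, nsmul_eq_mul]
  field_simp

lemma Pc_norm (n K : ℕ) (hn : 2 ≤ n) (hK : 1 ≤ K) :
    IsNormPoint (indMarkets n) (Pc n K) (1/((K:ℝ)+1)) := by
  have hn0 : (0:ℝ) < n := by exact_mod_cast Nat.pos_of_ne_zero (by omega)
  have hn2 : (2:ℝ) ≤ n := by exact_mod_cast hn
  have hK1 : (1:ℝ) ≤ K := by exact_mod_cast hK
  set t := 1/((K:ℝ)+1) with hts
  have ht0 : 0 ≤ t := by positivity
  have htp : t ≤ ((n:ℝ)-1)/n := by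
    have h1 : t ≤ 1/2 := by
      rw [hts, div_le_div_iff₀ (by linarith) (by norm_num)]
      linarith
    have h2 : (1:ℝ)/2 ≤ ((n:ℝ)-1)/n := by
      rw [div_le_div_iff₀ (by norm_num) hn0]
      linarith
    linarith
  refine ⟨⟨ht0, by rw [hts, div_le_one (by linarith)]; linarith⟩, ?_⟩
  rw [Fin.sum_univ_succ]
  have h0 : projMed n (fun k => indMarkets n k t) (fun i => Pc n K i 0) = t :=
    projMed_const n (by omega) ht0 htp _ (fun i => Pc_zero n K i 0 rfl)
  have hc : t/(n:ℝ) ≤ 1/((n:ℝ)*K) := by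
    rw [hts, div_div, div_le_div_iff₀ (by positivity) (by positivity)]
    nlinarith
  have hper : ∀ j : Fin (n*K), projMed n (fun k => indMarkets n k t)
      (fun i => Pc n K i j.succ) = t/(n:ℝ) := fun j =>
    projMed_single n hn ht0 hc _ ⟨(j:ℕ)/K, owner_lt n K hK j⟩
      (Pc_succ_owner n K hK j) (Pc_succ_other n K hK j)
  rw [h0, Finset.sum_congr rfl (fun j _ => hper j), Finset.sum_const,
    Finset.card_univ, Fintype.card_fin, nsmul_eq_mul]
  push_cast
  rw [hts]
  field_simp
  ring

lemma Pc_bound (n K : ℕ) (hn : 2 ≤ n) (hK : 1 ≤ K) (t : ℝ)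
    (hnp : IsNormPoint (indMarkets n) (Pc n K) t) (j0 : Fin (n*K+1)) (hj : (j0:ℕ) = 0) :
    output (indMarkets n) (Pc n K) t j0 ≤ 1/(K:ℝ) := by
  have hn0 : (0:ℝ) < n := by exact_mod_cast Nat.pos_of_ne_zero (by omega)
  have hK0 : (0:ℝ) < K := by exact_mod_cast Nat.pos_of_ne_zero (by omega)
  by_contra hgt
  push_neg at hgt
  obtain ⟨⟨ht0, ht1⟩, hsum⟩ := hnp
  have houtle : output (indMarkets n) (Pc n K) t j0 ≤ t :=
    projMed_le n (by omega) ht0 _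
  have htK : 1/(K:ℝ) < t := lt_of_lt_of_le hgt houtle
  have hc : 1/((n:ℝ)*K) ≤ t/n := by
    have h1 : 1 < t*K := by rwa [div_lt_iff₀ hK0] at htK
    rw [div_le_div_iff₀ (by positivity) hn0]
    nlinarith
  have hper : ∀ j : Fin (n*K), 1/((n:ℝ)*K) ≤ projMed n (fun k => indMarkets n k t)
      (fun i => Pc n K i j.succ) := fun j =>
    le_projMed n (by omega) ht0 hc _ ⟨(j:ℕ)/K, owner_lt n K hK j⟩
      (le_of_eq (Pc_succ_owner n K hK j).symm)
  rw [Fin.sum_univ_succ] at hsum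
  have hS : (1:ℝ) ≤ ∑ j : Fin (n*K), projMed n (fun k => indMarkets n k t)
      (fun i => Pc n K i j.succ) := by
    calc (1:ℝ) = ∑ _j : Fin (n*K), 1/((n:ℝ)*K) := by
          rw [Finset.sum_const, Finset.card_univ, Fintype.card_fin, nsmul_eq_mul]
          push_cast
          field_simp
      _ ≤ _ := Finset.sum_le_sum (fun j _ => hper j)
  have h00 : projMed n (fun k => indMarkets n k t) (fun i => Pc n K i 0) =
      output (indMarkets n) (Pc n K) t j0 := by
    have : (0 : Fin (n*K+1)) = j0 := by
      apply Fin.ext; simp [hj]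
    rw [this]; rfl
  rw [h00] at hsum
  have : output (indMarkets n) (Pc n K) t j0 ≤ 0 := by linarith
  have hpos : (0:ℝ) < 1/(K:ℝ) := by positivity
  linarith


/-- The Independent Markets mechanism has no asymptotic
underfunding guarantee better than `(n-1)/n`. -/
theorem independent_markets_underfund_lower_bound
    (n : ℕ) (hn : 2 ≤ n) :
    (∀ ε ∈ Set.Ioo (0 : ℝ) 1,
      ∃ m : ℕ, ∃ hm : 0 < m, ∃ P : Fin n → Fin m → ℝ, IsProfile P ∧
        ∀ t, IsNormPoint (indMarkets n) P t →
          (1 - ε) * ((n : ℝ) - 1) / (n : ℝ) ≤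
            mean P ⟨0, hm⟩ - output (indMarkets n) P t ⟨0, hm⟩) ∧
    (∀ ε : ℝ, 0 < ε →
      ¬ ∃ (α : ℕ → ℕ → ℝ) (L : ℝ),
          Filter.Tendsto (fun m => α n m) Filter.atTop (nhds L) ∧
          L ≤ (1 - ε) * ((n : ℝ) - 1) / (n : ℝ) ∧
          UnderfundsByAtMost indMarkets α) := by
  have hn0 : (0:ℝ) < n := by exact_mod_cast Nat.pos_of_ne_zero (by omega)
  have hn2 : (2:ℝ) ≤ n := by exact_mod_cast hn
  have hp : (0:ℝ) < ((n:ℝ)-1)/n := by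
    apply div_pos <;> linarith
  -- key: for every K ≥ something, the construction gives the bound
  have key : ∀ K : ℕ, 1 ≤ K → ∀ δ : ℝ, 1/(K:ℝ) ≤ δ →
      ∃ m : ℕ, ∃ hm : 0 < m, ∃ P : Fin n → Fin m → ℝ, IsProfile P ∧
        IsNormPoint (indMarkets n) P (1/((K:ℝ)+1)) ∧ n*K+1 = m ∧
        ∀ t, IsNormPoint (indMarkets n) P t →
          ((n:ℝ)-1)/n - δ ≤ mean P ⟨0, hm⟩ - output (indMarkets n) P t ⟨0, hm⟩ := by
    intro K hK δ hδ
    refine ⟨n*K+1, Nat.succ_pos _, Pc n K, Pc_profile n K hn hK, Pc_norm n K hn hK, rfl, ?_⟩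
    intro t hnp
    have hb := Pc_bound n K hn hK t hnp ⟨0, Nat.succ_pos _⟩ rfl
    rw [Pc_mean0 n K hn ⟨0, Nat.succ_pos _⟩ rfl]
    linarith
  constructor
  · rintro ε ⟨hε0, hε1⟩
    set δ := ε * (((n:ℝ)-1)/n) with hδs
    have hδ0 : 0 < δ := by positivity
    obtain ⟨K, hK1, hKδ⟩ : ∃ K : ℕ, 1 ≤ K ∧ 1/(K:ℝ) ≤ δ := by
      obtain ⟨K, hK⟩ := exists_nat_gt (1/δ)
      refine ⟨K + 1, by omega, ?_⟩
      have hKpos : (0:ℝ) < (K:ℝ) + 1 := by positivity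
      rw [show ((K+1:ℕ):ℝ) = (K:ℝ)+1 by push_cast; ring, div_le_iff₀ hKpos]
      rw [div_lt_iff₀ hδ0] at hK
      nlinarith
    obtain ⟨m, hm, P, hP, _, _, hbound⟩ := key K hK1 δ hKδ
    refine ⟨m, hm, P, hP, fun t ht => ?_⟩
    have := hbound t ht
    have heq : (1 - ε) * ((n : ℝ) - 1) / (n : ℝ) = ((n:ℝ)-1)/n - δ := by
      rw [hδs]; field_simp
    linarith [heq ▸ this]
  · rintro ε hε0 ⟨α, L, hT, hL, hU⟩
    set p := ((n:ℝ)-1)/n with hps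
    set δ := ε * p / 2 with hδs
    have hδ0 : 0 < δ := by positivity
    have hev : ∀ᶠ m in Filter.atTop, α n m < L + δ :=
      hT.eventually_lt_const (by linarith)
    obtain ⟨M, hM⟩ := Filter.eventually_atTop.mp hev
    obtain ⟨K, hK1, hKδ, hKM⟩ : ∃ K : ℕ, 1 ≤ K ∧ 1/(K:ℝ) ≤ δ ∧ M ≤ K := by
      obtain ⟨K0, hK0⟩ := exists_nat_gt (1/δ)
      refine ⟨K0 + 1 + M, by omega, ?_, by omega⟩
      have hKpos : (0:ℝ) < (K0:ℝ) + 1 + (M:ℝ) := by positivity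
      rw [show ((K0+1+M:ℕ):ℝ) = (K0:ℝ)+1+(M:ℝ) by push_cast; ring, div_le_iff₀ hKpos]
      rw [div_lt_iff₀ hδ0] at hK0
      have hM0 : (0:ℝ) ≤ (M:ℝ) := Nat.cast_nonneg M
      nlinarith
    obtain ⟨m, hm, P, hP, hnorm, hmeq, hbound⟩ := key K hK1 δ hKδ
    have hKnK : K ≤ n*K := Nat.le_mul_of_pos_left K (by omega)
    have hmM : M ≤ m := by omega
    have h1 := hU n m (by omega) hm P hP (1/((K:ℝ)+1)) hnorm ⟨0, hm⟩
    have h2 := hbound (1/((K:ℝ)+1)) hnorm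
    have h3 := hM m hmM
    have h4 : L + δ ≤ (1 - ε) * ((n : ℝ) - 1) / (n : ℝ) + δ := by linarith
    have heq : (1 - ε) * ((n : ℝ) - 1) / (n : ℝ) = p - ε * p := by
      rw [hps]; field_simp
    rw [heq] at h4
    linarith
end

section
/- Let m ∈ ℕ and β, γ ≥ 0, and let A be a budget aggregation mechanism (a map from preference profiles to the simplex Δ^(m)) such that for every n and every profile P on n voters and m projects, A(P)_j − P̄_j ≤ β and P̄_j − A(P)_j ≤ γ for all projects j. Then A is α-approximate for m with α = 2·max_{k ∈ {1,…,m−1}} min{kβ, (m−k)γ}; that is, Σ_{j=1}^m |A(P)_j − P̄_j| ≤ 2·max_{k ∈ {1,…,m−1}} min{kβ, (m−k)γ} for every such profile P. -/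
open Finset

/-- A mechanism overfunding by at most `β` and underfunding by at
most `γ` is `2 · max_{k ∈ [m-1]} min(kβ, (m-k)γ)`-approximate for `m`. -/
theorem overfund_underfund_to_l1_approx
    (m : ℕ) (hm : 0 < m) (β γ : ℝ) (hβ : 0 ≤ β) (hγ : 0 ≤ γ)
    (A : (n : ℕ) → (Fin n → Fin m → ℝ) → Fin m → ℝ)
    (hsimplex : ∀ n, 0 < n → ∀ P : Fin n → Fin m → ℝ, IsProfile P →
      (∀ j, 0 ≤ A n P j) ∧ ∑ j, A n P j = 1)
    (hover : ∀ n, 0 < n → ∀ P : Fin n → Fin m → ℝ, IsProfile P →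
      ∀ j, A n P j - mean P j ≤ β)
    (hunder : ∀ n, 0 < n → ∀ P : Fin n → Fin m → ℝ, IsProfile P →
      ∀ j, mean P j - A n P j ≤ γ)
    (n : ℕ) (hn : 0 < n) (P : Fin n → Fin m → ℝ) (hP : IsProfile P) :
    ∑ j, |A n P j - mean P j| ≤
      2 * ⨆ k ∈ Finset.Icc 1 (m - 1), min ((k : ℝ) * β) (((m : ℝ) - (k : ℝ)) * γ) := by
  classical
  set g : ℕ → ℝ := fun k => min ((k : ℝ) * β) (((m : ℝ) - (k : ℝ)) * γ) with hg
  set F : ℕ → ℝ := fun k => ⨆ _ : k ∈ Finset.Icc 1 (m - 1), g k with hFdef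
  have hgnonneg : ∀ k ∈ Finset.Icc 1 (m - 1), 0 ≤ g k := by
    intro k hk
    rw [Finset.mem_Icc] at hk
    have h1 : (1 : ℝ) ≤ (k : ℝ) := by exact_mod_cast hk.1
    have h2 : (k : ℝ) ≤ (m : ℝ) - 1 := by
      have : k ≤ m - 1 := hk.2
      have : (k : ℝ) ≤ ((m - 1 : ℕ) : ℝ) := by exact_mod_cast this
      rwa [Nat.cast_sub hm, Nat.cast_one] at this
    exact le_min (by nlinarith) (by nlinarith)
  have hFnonneg : ∀ k, 0 ≤ F k := by
    intro k
    exact Real.iSup_nonneg fun hk => hgnonneg k hk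
  have hFbdd : BddAbove (Set.range F) := by
    refine ⟨max 0 ((m : ℝ) * β), ?_⟩
    rintro _ ⟨k, rfl⟩
    refine Real.iSup_le (fun hk => ?_) (le_max_left _ _)
    rw [Finset.mem_Icc] at hk
    refine le_trans (min_le_left _ _) (le_max_of_le_right ?_)
    have : (k : ℝ) ≤ (m : ℝ) := by
      exact_mod_cast le_trans hk.2 (Nat.sub_le m 1)
    nlinarith
  have hsupnonneg : 0 ≤ ⨆ k, F k := le_trans (hFnonneg 0) (le_ciSup hFbdd 0)
  -- deviations
  set d : Fin m → ℝ := fun j => A n P j - mean P j with hd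
  have hsumd : ∑ j, d j = 0 := by
    have h1 : ∑ j, A n P j = 1 := (hsimplex n hn P hP).2
    have h2 : ∑ j, mean P j = 1 := by
      unfold mean
      rw [← Finset.sum_div, Finset.sum_comm]
      rw [Finset.sum_congr rfl (fun i _ => hP.2 i)]
      simp
      omega
    simp only [hd, Finset.sum_sub_distrib, h1, h2, sub_self]
  set S : Finset (Fin m) := Finset.univ.filter (fun j => 0 < d j) with hS
  set T : Finset (Fin m) := Finset.univ.filter (fun j => ¬ 0 < d j) with hT
  have hsplit : ∑ j ∈ S, d j + ∑ j ∈ T, d j = 0 := by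
    rw [Finset.sum_filter_add_sum_filter_not]; exact hsumd
  have habs : ∑ j, |d j| = 2 * ∑ j ∈ S, d j := by
    rw [← Finset.sum_filter_add_sum_filter_not Finset.univ (fun j => 0 < d j) (fun j => |d j|)]
    have h1 : ∑ j ∈ S, |d j| = ∑ j ∈ S, d j :=
      Finset.sum_congr rfl fun j hj => abs_of_pos (Finset.mem_filter.mp hj).2
    have h2 : ∑ j ∈ T, |d j| = -∑ j ∈ T, d j := by
      rw [← Finset.sum_neg_distrib]
      exact Finset.sum_congr rfl fun j hj =>
        abs_of_nonpos (not_lt.mp (Finset.mem_filter.mp hj).2)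
    rw [h1, h2]; linarith
  rcases eq_or_ne S ∅ with hSe | hSne
  · rw [habs, hSe]; simpa using hsupnonneg
  rcases eq_or_ne T ∅ with hTe | hTne
  · have : ∑ j ∈ S, d j = 0 := by
      rw [hTe] at hsplit; simpa using hsplit
    rw [habs, this]; simpa using hsupnonneg
  -- nondegenerate case
  have hScard : 1 ≤ S.card := Finset.card_pos.mpr (Finset.nonempty_iff_ne_empty.mpr hSne)
  have hTcard : 1 ≤ T.card := Finset.card_pos.mpr (Finset.nonempty_iff_ne_empty.mpr hTne)
  have hST : S.card + T.card = m := by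
    rw [hS, hT, Finset.card_filter_add_card_filter_not]
    simp
  have hkmem : S.card ∈ Finset.Icc 1 (m - 1) := by
    rw [Finset.mem_Icc]
    exact ⟨hScard, by omega⟩
  have hbound1 : ∑ j ∈ S, d j ≤ (S.card : ℝ) * β := by
    calc ∑ j ∈ S, d j ≤ ∑ j ∈ S, β :=
          Finset.sum_le_sum fun j _ => hover n hn P hP j
      _ = (S.card : ℝ) * β := by rw [Finset.sum_const, nsmul_eq_mul]
  have hbound2 : ∑ j ∈ S, d j ≤ ((m : ℝ) - (S.card : ℝ)) * γ := by
    have h1 : ∑ j ∈ S, d j = ∑ j ∈ T, (mean P j - A n P j) := by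
      have : ∑ j ∈ T, (mean P j - A n P j) = -∑ j ∈ T, d j := by
        rw [← Finset.sum_neg_distrib]
        exact Finset.sum_congr rfl fun j _ => by simp [hd]
      rw [this]; linarith
    have h2 : ∑ j ∈ T, (mean P j - A n P j) ≤ (T.card : ℝ) * γ := by
      calc ∑ j ∈ T, (mean P j - A n P j) ≤ ∑ j ∈ T, γ :=
            Finset.sum_le_sum fun j _ => hunder n hn P hP j
        _ = (T.card : ℝ) * γ := by rw [Finset.sum_const, nsmul_eq_mul]
    have h3 : (T.card : ℝ) = (m : ℝ) - (S.card : ℝ) := by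
      have := hST
      push_cast [← this]
      ring
    rw [h1]; rw [h3] at h2; exact h2
  have hmin : ∑ j ∈ S, d j ≤ g S.card := le_min hbound1 hbound2
  have hle : g S.card ≤ ⨆ k, F k := by
    refine le_ciSup_of_le hFbdd S.card ?_
    rw [hFdef]
    simp only
    rw [ciSup_pos hkmem]
  rw [habs]
  have : (⨆ k ∈ Finset.Icc 1 (m - 1), g k) = ⨆ k, F k := rfl
  rw [this]
  linarith [le_trans hmin hle]
end

section
/- The Ladder mechanism is (2/3)-approximate for m = 3: for every n and every preference profile P on n voters and 3 projects, Σ_{j=1}^3 |A(P)_j − P̄_j| ≤ 2/3, where A is the Ladder mechanism. -/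
open Finset

lemma med_mem {n : ℕ} {S : Multiset ℝ} (h : n < Multiset.card S) : med n S ∈ S := by
  have hn : n < (S.sort (· ≤ ·)).length := by rwa [Multiset.length_sort]
  rw [med, List.getD_eq_getElem _ 0 hn]
  rw [← Multiset.mem_sort (α := ℝ) (· ≤ ·)]
  exact List.getElem_mem hn

lemma le_med_countP (n : ℕ) (S : Multiset ℝ) (h : Multiset.card S = 2*n+1) :
    n + 1 ≤ S.countP (fun x => x ≤ med n S) := by
  set l := S.sort (· ≤ ·) with hl
  have hlen : l.length = 2*n+1 := by rw [hl, Multiset.length_sort, h]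
  have hn : n < l.length := by omega
  have hmed : med n S = l[n] := by rw [med, ← hl, List.getD_eq_getElem l 0 hn]
  have hsorted : l.Pairwise (· ≤ ·) := Multiset.pairwise_sort _ _
  have hS := Multiset.coe_countP (fun x => x ≤ med n S) l
  rw [hl, Multiset.sort_eq] at hS
  rw [hS]
  have hall : ∀ a ∈ l.take (n+1), decide (a ≤ med n S) = true := by
    intro a ha
    rcases List.mem_iff_getElem.1 ha with ⟨i, hi, rfl⟩
    have hilen : i < min (n+1) l.length := by rwa [← List.length_take]
    have hi' : i < l.length := lt_of_lt_of_le (Nat.lt_min.1 hilen).2 le_rfl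
    have : (l.take (n+1))[i] = l[i] := List.getElem_take
    rw [this, hmed]
    simp only [decide_eq_true_eq]
    have : l.get ⟨i, hi'⟩ ≤ l.get ⟨n, hn⟩ :=
      hsorted.rel_get_of_le (by simp [Fin.le_def]; omega)
    simpa using this
  calc n + 1 = (l.take (n+1)).length := by rw [List.length_take]; omega
    _ = (l.take (n+1)).countP (fun x => decide (x ≤ med n S)) :=
        (List.countP_eq_length.2 hall).symm
    _ ≤ l.countP (fun x => decide (x ≤ med n S)) :=
        (List.take_sublist _ _).countP_le

lemma med_le_countP (n : ℕ) (S : Multiset ℝ) (h : Multiset.card S = 2*n+1) :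
    n + 1 ≤ S.countP (fun x => med n S ≤ x) := by
  set l := S.sort (· ≤ ·) with hl
  have hlen : l.length = 2*n+1 := by rw [hl, Multiset.length_sort, h]
  have hn : n < l.length := by omega
  have hmed : med n S = l[n] := by rw [med, ← hl, List.getD_eq_getElem l 0 hn]
  have hsorted : l.Pairwise (· ≤ ·) := Multiset.pairwise_sort _ _
  have hS := Multiset.coe_countP (fun x => med n S ≤ x) l
  rw [hl, Multiset.sort_eq] at hS
  rw [hS]
  have hall : ∀ a ∈ l.drop n, decide (med n S ≤ a) = true := by
    intro a ha
    rcases List.mem_iff_getElem.1 ha with ⟨i, hi, rfl⟩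
    have hi2 : n + i < l.length := by rw [List.length_drop] at hi; omega
    have : (l.drop n)[i] = l[n+i] := List.getElem_drop
    rw [this, hmed]
    simp only [decide_eq_true_eq]
    have : l.get ⟨n, hn⟩ ≤ l.get ⟨n+i, hi2⟩ :=
      hsorted.rel_get_of_le (by simp [Fin.le_def])
    simpa using this
  calc n + 1 = (l.drop n).length := by rw [List.length_drop]; omega
    _ = (l.drop n).countP (fun x => decide (med n S ≤ x)) :=
        (List.countP_eq_length.2 hall).symm
    _ ≤ l.countP (fun x => decide (med n S ≤ x)) :=
        (List.drop_sublist _ _).countP_le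

lemma ladder_anti (n : ℕ) (t : ℝ) {k l : ℕ} (h : k ≤ l) : ladder n l t ≤ ladder n k t := by
  unfold ladder
  have h1 : (k:ℝ)/(n:ℝ) ≤ (l:ℝ)/(n:ℝ) := by
    rcases Nat.eq_zero_or_pos n with rfl | hn
    · simp
    · gcongr
  exact max_le_max (by linarith) le_rfl

lemma ladder_key {n : ℕ} (hn : 0 < n) {t : ℝ} (ht0 : 0 ≤ t) (ht1 : t ≤ 1)
    (v : Fin n → ℝ) (hv0 : ∀ i, 0 ≤ v i) (hv1 : ∀ i, v i ≤ 1) :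
    0 ≤ projMed n (fun k => ladder n k t) v ∧
    projMed n (fun k => ladder n k t) v ≤ t ∧
    projMed n (fun k => ladder n k t) v - (∑ i, v i) / (n:ℝ)
      ≤ (t - projMed n (fun k => ladder n k t) v) * projMed n (fun k => ladder n k t) v ∧
    (∑ i, v i) / (n:ℝ) - projMed n (fun k => ladder n k t) v
      ≤ (1 - t + projMed n (fun k => ladder n k t) v) * (1 - projMed n (fun k => ladder n k t) v) := by
  have hN : (0:ℝ) < (n:ℝ) := by exact_mod_cast hn
  set f : ℕ → ℝ := fun k => ladder n k t with hf
  set S : Multiset ℝ := (Multiset.range (n + 1)).map f + Finset.univ.val.map v with hSdef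
  have hcard : Multiset.card S = 2*n+1 := by simp [hSdef]; omega
  set a : ℝ := projMed n f v with ha
  have haS : a = med n S := rfl
  -- a ≥ 0
  have h0a : 0 ≤ a := by
    have hmem : a ∈ S := haS ▸ med_mem (by omega)
    rw [hSdef, Multiset.mem_add] at hmem
    rcases hmem with hmem | hmem
    · rcases Multiset.mem_map.1 hmem with ⟨k, -, hk⟩
      calc (0:ℝ) ≤ f k := le_max_right _ _
      _ = a := hk
    · rcases Multiset.mem_map.1 hmem with ⟨i, -, hi⟩
      calc (0:ℝ) ≤ v i := hv0 i
      _ = a := hi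
  -- counting: upper side
  have hM2 := med_le_countP n S hcard
  rw [← haS, hSdef, Multiset.countP_add, Multiset.countP_map, Multiset.countP_map] at hM2
  set r : ℕ := (Finset.univ.filter (fun i => a ≤ v i)).card with hr
  have hrcount : Multiset.card (Multiset.filter (fun i => a ≤ v i) Finset.univ.val) = r := by
    rw [hr, Finset.card_def, Finset.filter_val]
  rw [hrcount] at hM2
  have hrn : r ≤ n := by
    calc r ≤ Finset.univ.card := Finset.card_filter_le _ _
    _ = n := by simp
  have hphantomcount :
      Multiset.card (Multiset.filter (fun k => a ≤ f k) (Multiset.range (n+1)))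
        = ((Finset.range (n+1)).filter (fun k => a ≤ f k)).card := by
    rw [Finset.card_def, Finset.filter_val, Finset.range_val]
  rw [hphantomcount] at hM2
  -- a ≤ f (n - r)
  have haf : a ≤ f (n - r) := by
    by_contra hcon
    push_neg at hcon
    have hsub : (Finset.range (n+1)).filter (fun k => a ≤ f k) ⊆ Finset.range (n - r) := by
      intro k hk
      rw [Finset.mem_filter] at hk
      rw [Finset.mem_range]
      by_contra hk2
      push_neg at hk2
      exact absurd (le_trans hk.2 (ladder_anti n t hk2)) (not_le.2 hcon)
    have := Finset.card_le_card hsub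
    rw [Finset.card_range] at this
    omega
  -- vote sum lower bound
  have hrs : (r:ℝ) * a ≤ ∑ i, v i := by
    have h1 : r • a ≤ ∑ i ∈ Finset.univ.filter (fun i => a ≤ v i), v i :=
      Finset.card_nsmul_le_sum _ _ _ (fun x hx => (Finset.mem_filter.1 hx).2)
    have h2 : ∑ i ∈ Finset.univ.filter (fun i => a ≤ v i), v i ≤ ∑ i, v i :=
      Finset.sum_le_sum_of_subset_of_nonneg (Finset.filter_subset _ _) (fun i _ _ => hv0 i)
    rw [nsmul_eq_mul] at h1
    linarith
  -- a ≤ max (t - (n-r)/n) 0 with real cast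
  have hcast : ((n - r : ℕ) : ℝ) = (n:ℝ) - (r:ℝ) := by
    rw [Nat.cast_sub hrn]
  have haf' : a ≤ max (t - ((n:ℝ) - (r:ℝ))/(n:ℝ)) 0 := by
    have := haf
    rw [hf] at this
    simpa [ladder, hcast] using this
  -- a ≤ t
  have hat : a ≤ t := by
    have h1 : (0:ℝ) ≤ ((n:ℝ) - (r:ℝ))/(n:ℝ) := by
      apply div_nonneg _ hN.le
      have : (r:ℝ) ≤ (n:ℝ) := by exact_mod_cast hrn
      linarith
    calc a ≤ max (t - ((n:ℝ) - (r:ℝ))/(n:ℝ)) 0 := haf'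
    _ ≤ t := max_le (by linarith) ht0
  -- counting: lower side
  have hM1 := le_med_countP n S hcard
  rw [← haS, hSdef, Multiset.countP_add, Multiset.countP_map, Multiset.countP_map] at hM1
  set s' : ℕ := (Finset.univ.filter (fun i => v i ≤ a)).card with hs'
  have hscount : Multiset.card (Multiset.filter (fun i => v i ≤ a) Finset.univ.val) = s' := by
    rw [hs', Finset.card_def, Finset.filter_val]
  rw [hscount] at hM1
  have hsn : s' ≤ n := by
    calc s' ≤ Finset.univ.card := Finset.card_filter_le _ _
    _ = n := by simp
  have hphantomcount2 :
      Multiset.card (Multiset.filter (fun k => f k ≤ a) (Multiset.range (n+1)))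
        = ((Finset.range (n+1)).filter (fun k => f k ≤ a)).card := by
    rw [Finset.card_def, Finset.filter_val, Finset.range_val]
  rw [hphantomcount2] at hM1
  -- f s' ≤ a
  have hfs : f s' ≤ a := by
    by_contra hcon
    push_neg at hcon
    have hsub : (Finset.range (n+1)).filter (fun k => f k ≤ a) ⊆ Finset.Ico (s'+1) (n+1) := by
      intro k hk
      rw [Finset.mem_filter, Finset.mem_range] at hk
      rw [Finset.mem_Ico]
      refine ⟨?_, hk.1⟩
      by_contra hk2
      push_neg at hk2
      exact absurd (le_trans (ladder_anti n t (by omega : k ≤ s')) hk.2) (not_le.2 hcon)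
    have := Finset.card_le_card hsub
    rw [Nat.card_Ico] at this
    omega
  have hsa : t - (s':ℝ)/(n:ℝ) ≤ a := by
    refine le_trans ?_ hfs
    rw [hf]
    exact le_max_left _ _
  -- vote sum upper bound
  have hsup : ∑ i, v i ≤ (s':ℝ) * a + ((n:ℝ) - (s':ℝ)) := by
    have h1 : ∑ i ∈ Finset.univ.filter (fun i => v i ≤ a), v i ≤ s' • a :=
      Finset.sum_le_card_nsmul _ _ _ (fun x hx => (Finset.mem_filter.1 hx).2)
    have h2 : ∑ i ∈ Finset.univ.filter (fun i => ¬ (v i ≤ a)), v i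
        ≤ (Finset.univ.filter (fun i => ¬ (v i ≤ a))).card • (1:ℝ) :=
      Finset.sum_le_card_nsmul _ _ _ (fun x _ => hv1 x)
    have h3 : (Finset.univ.filter (fun i => ¬ (v i ≤ a))).card = n - s' := by
      have := Finset.card_filter_add_card_filter_not (s := (Finset.univ : Finset (Fin n)))
        (fun i => v i ≤ a)
      simp only [Finset.card_univ, Fintype.card_fin] at this
      omega
    have h4 := Finset.sum_filter_add_sum_filter_not Finset.univ (fun i => v i ≤ a) v
    rw [nsmul_eq_mul] at h1
    rw [h3, nsmul_eq_mul, mul_one] at h2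
    have h5 : ((n - s' : ℕ) : ℝ) = (n:ℝ) - (s':ℝ) := by rw [Nat.cast_sub hsn]
    rw [h5] at h2
    linarith
  refine ⟨h0a, hat, ?_, ?_⟩
  -- overfunding bound
  · rcases eq_or_lt_of_le h0a with h | h
    · rw [← h]
      have hnn : (0:ℝ) ≤ ∑ i, v i := Finset.sum_nonneg fun i _ => hv0 i
      have h6 : 0 ≤ (∑ i, v i) / (n:ℝ) := div_nonneg hnn hN.le
      nlinarith
    · have hta : a ≤ t - ((n:ℝ) - (r:ℝ))/(n:ℝ) := by
        rcases le_max_iff.1 haf' with h' | h'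
        · exact h'
        · linarith
      have h1 : (n:ℝ) - (r:ℝ) ≤ (t - a) * (n:ℝ) := by
        have h2 : ((n:ℝ) - (r:ℝ))/(n:ℝ) ≤ t - a := by linarith
        exact (div_le_iff₀ hN).1 h2
      have h2 : ((n:ℝ) - (r:ℝ)) * a ≤ (t - a) * (n:ℝ) * a :=
        mul_le_mul_of_nonneg_right h1 h.le
      rw [sub_le_iff_le_add, ← sub_le_iff_le_add', le_div_iff₀ hN]
      nlinarith [hrs]
  -- underfunding bound
  · have ha1 : a ≤ 1 := le_trans hat ht1
    have h4 : (n:ℝ) * (t - a) ≤ (s':ℝ) := by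
      have : (t - a) ≤ (s':ℝ)/(n:ℝ) := by linarith
      calc (n:ℝ) * (t-a) ≤ (n:ℝ) * ((s':ℝ)/(n:ℝ)) := by
            exact mul_le_mul_of_nonneg_left this hN.le
      _ = (s':ℝ) := by field_simp
    have h5 : (n:ℝ) * (t - a) * (1 - a) ≤ (s':ℝ) * (1 - a) :=
      mul_le_mul_of_nonneg_right h4 (by linarith)
    rw [sub_le_iff_le_add, div_le_iff₀ hN]
    nlinarith [hsup]



lemma final_ineq (a1 a2 a3 p1 p2 p3 t : ℝ)
    (ha1 : 0 ≤ a1) (ha2 : 0 ≤ a2) (ha3 : 0 ≤ a3)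
    (hta1 : a1 ≤ t) (hta2 : a2 ≤ t) (hta3 : a3 ≤ t) (ht1 : t ≤ 1)
    (hA1 : a1 - p1 ≤ (t - a1) * a1) (hA2 : a2 - p2 ≤ (t - a2) * a2)
    (hA3 : a3 - p3 ≤ (t - a3) * a3)
    (hB1 : p1 - a1 ≤ (1 - t + a1) * (1 - a1)) (hB2 : p2 - a2 ≤ (1 - t + a2) * (1 - a2))
    (hB3 : p3 - a3 ≤ (1 - t + a3) * (1 - a3))
    (hsa : a1 + a2 + a3 = 1) (hsp : p1 + p2 + p3 = 1) :
    |a1 - p1| + |a2 - p2| + |a3 - p3| ≤ 2/3 := by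
  rcases le_total (a1 - p1) 0 with h1 | h1 <;>
    rcases le_total (a2 - p2) 0 with h2 | h2 <;>
      rcases le_total (a3 - p3) 0 with h3 | h3
  · rw [abs_of_nonpos h1, abs_of_nonpos h2, abs_of_nonpos h3]; linarith
  · rw [abs_of_nonpos h1, abs_of_nonpos h2, abs_of_nonneg h3]
    nlinarith [hA3, sq_nonneg (t - 2*a3)]
  · rw [abs_of_nonpos h1, abs_of_nonneg h2, abs_of_nonpos h3]
    nlinarith [hA2, sq_nonneg (t - 2*a2)]
  · rw [abs_of_nonpos h1, abs_of_nonneg h2, abs_of_nonneg h3]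
    have e : 2/3 - ((t-a2)*a2 + (t-a3)*a3 + (1-t+a1)*(1-a1))
        = (1/2)*(a2-a3)^2 + (3/2)*(a2+a3-2/3)^2 := by
      have h : a1 = 1 - a2 - a3 := by linarith
      rw [h]; ring
    have q1 := sq_nonneg (a2-a3); have q2 := sq_nonneg (a2+a3-2/3); linarith
  · rw [abs_of_nonneg h1, abs_of_nonpos h2, abs_of_nonpos h3]
    nlinarith [hA1, sq_nonneg (t - 2*a1)]
  · rw [abs_of_nonneg h1, abs_of_nonpos h2, abs_of_nonneg h3]
    have e : 2/3 - ((t-a1)*a1 + (t-a3)*a3 + (1-t+a2)*(1-a2))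
        = (1/2)*(a1-a3)^2 + (3/2)*(a1+a3-2/3)^2 := by
      have h : a2 = 1 - a1 - a3 := by linarith
      rw [h]; ring
    have q1 := sq_nonneg (a1-a3); have q2 := sq_nonneg (a1+a3-2/3); linarith
  · rw [abs_of_nonneg h1, abs_of_nonneg h2, abs_of_nonpos h3]
    have e : 2/3 - ((t-a1)*a1 + (t-a2)*a2 + (1-t+a3)*(1-a3))
        = (1/2)*(a1-a2)^2 + (3/2)*(a1+a2-2/3)^2 := by
      have h : a3 = 1 - a1 - a2 := by linarith
      rw [h]; ring
    have q1 := sq_nonneg (a1-a2); have q2 := sq_nonneg (a1+a2-2/3); linarith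
  · rw [abs_of_nonneg h1, abs_of_nonneg h2, abs_of_nonneg h3]; linarith

/-- The Ladder mechanism is `2/3`-approximate for `m = 3`. -/
theorem ladder_two_thirds_approximate
    (n : ℕ) (hn : 0 < n) (P : Fin n → Fin 3 → ℝ) (hP : IsProfile P)
    (t : ℝ) (ht : IsNormPoint (ladder n) P t) :
    ∑ j, |output (ladder n) P t j - mean P j| ≤ 2 / 3 := by
  obtain ⟨⟨ht0, ht1⟩, hnorm⟩ := ht
  obtain ⟨hP01, hProw⟩ := hP
  have key : ∀ j : Fin 3, 0 ≤ output (ladder n) P t j ∧ output (ladder n) P t j ≤ t ∧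
      output (ladder n) P t j - mean P j
        ≤ (t - output (ladder n) P t j) * output (ladder n) P t j ∧
      mean P j - output (ladder n) P t j
        ≤ (1 - t + output (ladder n) P t j) * (1 - output (ladder n) P t j) := by
    intro j
    exact ladder_key hn ht0 ht1 (fun i => P i j)
      (fun i => (hP01 i j).1) (fun i => (hP01 i j).2)
  have hsa : output (ladder n) P t 0 + output (ladder n) P t 1
      + output (ladder n) P t 2 = 1 := by
    rw [Fin.sum_univ_three] at hnorm
    exact hnorm
  have hsp : mean P 0 + mean P 1 + mean P 2 = 1 := by
    have hms : ∑ j, mean P j = 1 := by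
      simp only [mean, ← Finset.sum_div]
      rw [Finset.sum_comm]
      rw [Finset.sum_congr rfl fun i _ => hProw i]
      have hn' : (n:ℝ) ≠ 0 := by positivity
      simp [hn']
    rw [Fin.sum_univ_three] at hms
    exact hms
  obtain ⟨k01, k02, k03, k04⟩ := key 0
  obtain ⟨k11, k12, k13, k14⟩ := key 1
  obtain ⟨k21, k22, k23, k24⟩ := key 2
  rw [Fin.sum_univ_three]
  exact final_ineq _ _ _ _ _ _ t k01 k11 k21 k02 k12 k22 ht1
    k03 k13 k23 k04 k14 k24 hsa hsp
end

section
/- Let A be any moving phantom mechanism, let n ≥ 1 and m ≥ 2, and let P be the preference profile on n voters and m projects in which ⌊n/2⌋ voters report (1,0,…,0) and the remaining n − ⌊n/2⌋ voters report (1/m, 1/m, …, 1/m). Then A(P)_j = 1/m for every project j ∈ {1,…,m}. -/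
open Finset

-- list-level lemmas
lemma list_getD_le {l : List ℝ} (hl : l.Pairwise (· ≤ ·)) {n : ℕ} {c : ℝ}
    (h : n + 1 ≤ l.countP (fun a => decide (a ≤ c))) : l.getD n 0 ≤ c := by
  have hn : n < l.length :=
    lt_of_lt_of_le (Nat.lt_succ_self n) (le_trans h List.countP_le_length)
  rw [List.getD_eq_getElem l 0 hn]
  by_contra hc
  push_neg at hc
  have hmem : l[n] ∈ l.take (n+1) := by
    have hlt : n < (l.take (n+1)).length := by
      rw [List.length_take]; omega
    have he : (l.take (n+1))[n] = l[n] := List.getElem_take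
    rw [← he]; exact List.getElem_mem hlt
  have h1 : List.countP (fun a => decide (a ≤ c)) (l.drop (n+1)) = 0 := by
    rw [List.countP_eq_zero]
    intro a ha
    have hle : l[n] ≤ a := hl.rel_of_mem_take_of_mem_drop hmem ha
    simp only [decide_eq_true_eq]
    linarith
  have h2 : List.countP (fun a => decide (a ≤ c)) (l.take (n+1)) ≤ n := by
    have hlen : (l.take (n+1)).length = n+1 := by rw [List.length_take]; omega
    have hne : List.countP (fun a => decide (a ≤ c)) (l.take (n+1)) ≠ n+1 := by
      intro he
      have hall := List.countP_eq_length.mp (by rw [hlen]; exact he)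
      have := hall _ hmem
      simp only [decide_eq_true_eq] at this
      linarith
    have hle := List.countP_le_length (l := l.take (n+1)) (p := fun a => decide (a ≤ c))
    omega
  have h3 := List.countP_append (p := fun a => decide (a ≤ c)) (l₁ := l.take (n+1)) (l₂ := l.drop (n+1))
  rw [List.take_append_drop] at h3
  omega

lemma list_le_getD {l : List ℝ} (hl : l.Pairwise (· ≤ ·)) {n : ℕ} {c : ℝ}
    (hcard : l.length ≤ 2*n+1) (hn : n < l.length)
    (h : n + 1 ≤ l.countP (fun a => decide (c ≤ a))) : c ≤ l.getD n 0 := by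
  rw [List.getD_eq_getElem l 0 hn]
  by_contra hc
  push_neg at hc
  have hmem : l[n] ∈ l.drop n := by
    have h0 : 0 < (l.drop n).length := by rw [List.length_drop]; omega
    have he : (l.drop n)[0] = l[n] := by
      simp [List.getElem_drop]
    rw [← he]; exact List.getElem_mem h0
  have h1 : List.countP (fun a => decide (c ≤ a)) (l.take n) = 0 := by
    rw [List.countP_eq_zero]
    intro a ha
    have hle : a ≤ l[n] := hl.rel_of_mem_take_of_mem_drop ha hmem
    simp only [decide_eq_true_eq]
    linarith
  have h2 : List.countP (fun a => decide (c ≤ a)) (l.drop n) ≤ n := by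
    have hlen : (l.drop n).length = l.length - n := List.length_drop
    have hne : List.countP (fun a => decide (c ≤ a)) (l.drop n) ≠ (l.drop n).length := by
      intro he
      have hall := List.countP_eq_length.mp he
      have := hall _ hmem
      simp only [decide_eq_true_eq] at this
      linarith
    have hle := List.countP_le_length (l := l.drop n) (p := fun a => decide (c ≤ a))
    omega
  have h3 := List.countP_append (p := fun a => decide (c ≤ a)) (l₁ := l.take n) (l₂ := l.drop n)
  rw [List.take_append_drop] at h3
  omega

lemma list_countP_le_getD {l : List ℝ} (hl : l.Pairwise (· ≤ ·)) {n : ℕ} (hn : n < l.length) :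
    n + 1 ≤ l.countP (fun a => decide (a ≤ l.getD n 0)) := by
  rw [List.getD_eq_getElem l 0 hn]
  have hlen : (l.take (n+1)).length = n+1 := by rw [List.length_take]; omega
  have hall : ∀ a ∈ l.take (n+1), (fun a => decide (a ≤ l[n])) a = true := by
    intro a ha
    obtain ⟨i, hi, rfl⟩ := List.mem_iff_getElem.mp ha
    rw [hlen] at hi
    have he : (l.take (n+1))[i]'(by omega) = l[i]'(by omega) := List.getElem_take
    rw [he]
    simp only [decide_eq_true_eq]
    exact hl.rel_get_of_le (a := ⟨i, by omega⟩) (b := ⟨n, hn⟩) (by simp; omega)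
  have h1 : List.countP (fun a => decide (a ≤ l[n])) (l.take (n+1)) = n + 1 := by
    rw [List.countP_eq_length.mpr hall, hlen]
  have h3 := List.countP_append (p := fun a => decide (a ≤ l[n])) (l₁ := l.take (n+1)) (l₂ := l.drop (n+1))
  rw [List.take_append_drop] at h3
  omega

lemma list_countP_getD_le {l : List ℝ} (hl : l.Pairwise (· ≤ ·)) {n : ℕ}
    (hlen : l.length = 2*n+1) :
    n + 1 ≤ l.countP (fun a => decide (l.getD n 0 ≤ a)) := by
  have hn : n < l.length := by omega
  rw [List.getD_eq_getElem l 0 hn]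
  have hdlen : (l.drop n).length = n+1 := by rw [List.length_drop]; omega
  have hall : ∀ a ∈ l.drop n, (fun a => decide (l[n] ≤ a)) a = true := by
    intro a ha
    obtain ⟨i, hi, rfl⟩ := List.mem_iff_getElem.mp ha
    have he : (l.drop n)[i] = l[n+i]'(by rw [hdlen] at hi; omega) := List.getElem_drop
    rw [he]
    simp only [decide_eq_true_eq]
    exact hl.rel_get_of_le (a := ⟨n, hn⟩) (b := ⟨n+i, by rw [hdlen] at hi; omega⟩) (by simp)
  have h1 : List.countP (fun a => decide (l[n] ≤ a)) (l.drop n) = n + 1 := by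
    rw [List.countP_eq_length.mpr hall, hdlen]
  have h3 := List.countP_append (p := fun a => decide (l[n] ≤ a)) (l₁ := l.take n) (l₂ := l.drop n)
  rw [List.take_append_drop] at h3
  omega

-- multiset-level lemmas
lemma countP_sort (p : ℝ → Prop) [DecidablePred p] (s : Multiset ℝ) :
    List.countP (fun a => decide (p a)) (s.sort (· ≤ ·)) = Multiset.countP p s := by
  rw [← Multiset.coe_countP, Multiset.sort_eq]

lemma med_le_count {n : ℕ} {s : Multiset ℝ} {c : ℝ}
    (h : n + 1 ≤ Multiset.countP (fun a => a ≤ c) s) : med n s ≤ c := by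
  unfold med
  exact list_getD_le (Multiset.pairwise_sort _ _) (by rwa [countP_sort (fun a => a ≤ c)])

lemma le_med_count {n : ℕ} {s : Multiset ℝ} {c : ℝ}
    (hcard : Multiset.card s = 2*n+1)
    (h : n + 1 ≤ Multiset.countP (fun a => c ≤ a) s) : c ≤ med n s := by
  unfold med
  exact list_le_getD (Multiset.pairwise_sort _ _)
    (by rw [Multiset.length_sort]; omega) (by rw [Multiset.length_sort]; omega)
    (by rwa [countP_sort (fun a => c ≤ a)])

lemma count_le_med {n : ℕ} {s : Multiset ℝ} (hn : n < Multiset.card s) :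
    n + 1 ≤ Multiset.countP (fun a => a ≤ med n s) s := by
  rw [← countP_sort (fun a => a ≤ med n s)]
  exact list_countP_le_getD (Multiset.pairwise_sort _ _) (by rwa [Multiset.length_sort])

lemma count_med_le {n : ℕ} {s : Multiset ℝ} (hcard : Multiset.card s = 2*n+1) :
    n + 1 ≤ Multiset.countP (fun a => med n s ≤ a) s := by
  rw [← countP_sort (fun a => med n s ≤ a)]
  exact list_countP_getD_le (Multiset.pairwise_sort _ _) (by rwa [Multiset.length_sort])

/-- On the profile where `⌊n/2⌋` voters report `(1,0,…,0)` and
the rest report the uniform distribution, every moving phantom mechanism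
outputs `1/m` for every project. -/
theorem uniform_outcome_on_polarized_profile
    (F : ℕ → ℕ → ℝ → ℝ) (hF : ∀ n, 0 < n → IsPhantomSystem n (F n))
    (n m : ℕ) (hn : 1 ≤ n) (hm : 2 ≤ m)
    (P : Fin n → Fin m → ℝ)
    (hPdef : ∀ i j, P i j =
      if (i : ℕ) < n / 2 then (if (j : ℕ) = 0 then 1 else 0) else 1 / (m : ℝ))
    (t : ℝ) (ht : IsNormPoint (F n) P t) (j : Fin m) :
    output (F n) P t j = 1 / (m : ℝ) := by
  obtain ⟨htI, hsum⟩ := ht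
  have hmR : (2:ℝ) ≤ (m:ℝ) := by exact_mod_cast hm
  set u : ℝ := 1 / (m : ℝ) with hu
  have hmpos : (0:ℝ) < (m:ℝ) := by linarith
  have hu0 : 0 < u := by positivity
  have hmu : (m:ℝ) * u = 1 := by rw [hu]; field_simp
  set r := n / 2 with hr
  have hrn : r < n := Nat.div_lt_self (by omega) (by omega)
  have h2r : 2 * r ≤ n := by omega
  set ph : ℕ → ℝ := fun k => F n k t with hph
  set vx : Fin n → ℝ := fun i => if (i:ℕ) < r then (0:ℝ) else u with hvx
  set vy : Fin n → ℝ := fun i => if (i:ℕ) < r then (1:ℝ) else u with hvy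
  set x := projMed n ph vx with hx
  set y := projMed n ph vy with hy
  set Φ : Multiset ℝ := (Multiset.range (n+1)).map ph with hΦ
  set Mx : Multiset ℝ := Φ + Finset.univ.val.map vx with hMx
  set My : Multiset ℝ := Φ + Finset.univ.val.map vy with hMy
  have hxmed : x = med n Mx := rfl
  have hymed : y = med n My := rfl
  have hΦcard : Multiset.card Φ = n + 1 := by
    rw [hΦ]; simp
  have hVcard : ∀ v : Fin n → ℝ, Multiset.card (Finset.univ.val.map v) = n := by
    intro v
    simp [Finset.card_univ]
  have hMxcard : Multiset.card Mx = 2*n+1 := by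
    rw [hMx, Multiset.card_add, hΦcard, hVcard]; ring
  have hMycard : Multiset.card My = 2*n+1 := by
    rw [hMy, Multiset.card_add, hΦcard, hVcard]; ring
  have hVcount : ∀ (v : Fin n → ℝ) (p : ℝ → Prop) (_ : DecidablePred p),
      Multiset.countP p (Finset.univ.val.map v)
        = (Finset.univ.filter (fun i => p (v i))).card := by
    intro v p _
    rw [Multiset.countP_map]
    rfl
  have hcard_lt : (Finset.univ.filter (fun i : Fin n => (i:ℕ) < r)).card = r := by
    have he : (Finset.univ.filter (fun i : Fin n => (i:ℕ) < r))
        = Finset.Iio (⟨r, hrn⟩ : Fin n) := by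
      ext i
      simp [Fin.lt_def]
    rw [he, Fin.card_Iio]
  have hcard_ge : (Finset.univ.filter (fun i : Fin n => ¬ (i:ℕ) < r)).card = n - r := by
    have h2 := Finset.card_filter_add_card_filter_not
      (s := Finset.univ) (p := fun i : Fin n => (i:ℕ) < r)
    rw [hcard_lt, Finset.card_univ, Fintype.card_fin] at h2
    omega
  -- output formula
  have hout : ∀ j : Fin m, projMed n (fun k => F n k t) (fun i => P i j)
      = if (j:ℕ) = 0 then y else x := by
    intro j
    by_cases hj : (j:ℕ) = 0
    · rw [if_pos hj, hy]
      congr 1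
      funext i
      rw [hPdef, hvy]
      simp [hj]
    · rw [if_neg hj, hx]
      congr 1
      funext i
      rw [hPdef, hvx]
      simp [hj]
  -- claim 1
  have claim1 : x < u → y ≤ u := by
    intro hxu
    have c1 : n + 1 ≤ Multiset.countP (fun a => a ≤ x) Mx := by
      rw [hxmed]
      exact count_le_med (by rw [hMxcard]; omega)
    rw [hMx, Multiset.countP_add] at c1
    have c2 : Multiset.countP (fun a => a ≤ x) (Finset.univ.val.map vx) ≤ r := by
      rw [hVcount vx _ inferInstance]
      refine le_trans (Finset.card_le_card ?_) (le_of_eq hcard_lt)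
      intro i hi
      simp only [Finset.mem_filter, Finset.mem_univ, true_and] at hi ⊢
      by_contra hik
      rw [hvx] at hi
      simp only [hik, if_neg, if_false] at hi
      linarith
    have c3 : n + 1 - r ≤ Multiset.countP (fun a => a ≤ x) Φ := by omega
    have c4 : Multiset.countP (fun a => a ≤ x) Φ ≤ Multiset.countP (fun a => a ≤ u) Φ := by
      rw [Multiset.countP_eq_card_filter, Multiset.countP_eq_card_filter]
      exact Multiset.card_le_card
        (Multiset.monotone_filter_right _ (fun a ha => le_trans ha (le_of_lt hxu)))
    have c5 : n - r ≤ Multiset.countP (fun a => a ≤ u) (Finset.univ.val.map vy) := by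
      rw [hVcount vy _ inferInstance]
      refine le_trans (le_of_eq hcard_ge.symm) (Finset.card_le_card ?_)
      intro i hi
      simp only [Finset.mem_filter, Finset.mem_univ, true_and] at hi ⊢
      rw [hvy]
      simp [hi]
    have c6 : n + 1 ≤ Multiset.countP (fun a => a ≤ u) My := by
      rw [hMy, Multiset.countP_add]
      omega
    rw [hymed]
    exact med_le_count c6
  -- claim 2
  have claim2 : u < x → u ≤ y := by
    intro hux
    have c1 : n + 1 ≤ Multiset.countP (fun a => x ≤ a) Mx := by
      rw [hxmed]
      exact count_med_le hMxcard
    rw [hMx, Multiset.countP_add] at c1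
    have c2 : Multiset.countP (fun a => x ≤ a) (Finset.univ.val.map vx) = 0 := by
      rw [hVcount vx _ inferInstance, Finset.card_eq_zero]
      refine Finset.filter_eq_empty_iff.mpr ?_
      intro i _
      rw [hvx]
      by_cases hik : (i:ℕ) < r
      · simp only [hik, if_pos]
        intro hc
        linarith
      · simp only [hik, if_neg, if_false]
        intro hc
        linarith
    have c3 : Multiset.countP (fun a => x ≤ a) Φ ≤ Multiset.countP (fun a => u ≤ a) Φ := by
      rw [Multiset.countP_eq_card_filter, Multiset.countP_eq_card_filter]
      exact Multiset.card_le_card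
        (Multiset.monotone_filter_right _ (fun a ha => le_trans (le_of_lt hux) ha))
    have c4 : n + 1 ≤ Multiset.countP (fun a => u ≤ a) My := by
      rw [hMy, Multiset.countP_add]
      omega
    rw [hymed]
    exact le_med_count hMycard c4
  -- the sum
  have hsum2 : y + ((m:ℝ) - 1) * x = 1 := by
    rw [Finset.sum_congr rfl (fun j _ => hout j)] at hsum
    rw [← Finset.add_sum_erase _ _ (Finset.mem_univ (⟨0, by omega⟩ : Fin m))] at hsum
    rw [if_pos rfl] at hsum
    have e2 : ∀ j ∈ Finset.univ.erase (⟨0, by omega⟩ : Fin m),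
        (if (j:ℕ) = 0 then y else x) = x := by
      intro j hj
      rw [if_neg]
      intro hj0
      exact (Finset.mem_erase.mp hj).1 (by apply Fin.ext; simpa using hj0)
    rw [Finset.sum_congr rfl e2, Finset.sum_const, nsmul_eq_mul,
      Finset.card_erase_of_mem (Finset.mem_univ _), Finset.card_univ, Fintype.card_fin] at hsum
    have ecast : ((m-1:ℕ):ℝ) = (m:ℝ)-1 := by
      push_cast [Nat.cast_sub (show 1 ≤ m by omega)]
      ring
    rw [ecast] at hsum
    linarith
  have hxu : x = u := by
    rcases lt_trichotomy x u with hlt | heq | hgt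
    · exfalso
      have hyu := claim1 hlt
      nlinarith [mul_lt_mul_of_pos_left hlt (show (0:ℝ) < (m:ℝ) - 1 by linarith)]
    · exact heq
    · exfalso
      have hyu := claim2 hgt
      nlinarith [mul_lt_mul_of_pos_left hgt (show (0:ℝ) < (m:ℝ) - 1 by linarith)]
  have hyu : y = u := by
    rw [hxu] at hsum2
    nlinarith [hmu]
  show projMed n (fun k => F n k t) (fun i => P i j) = u
  rw [hout j]
  by_cases hj : (j:ℕ) = 0
  · rw [if_pos hj, hyu]
  · rw [if_neg hj, hxu]
end

section
/- For any phantom system F_n = {f_0,…,f_n} for n voters and any preference profile P on n voters and m projects, the output of the associated mechanism is well defined: if t_1 and t_2 are both normalization points for (F_n, P), then for every project j, med(f_0(t_1),…,f_n(t_1),P_{1j},…,P_{nj}) = med(f_0(t_2),…,f_n(t_2),P_{1j},…,P_{nj}). -/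
open Finset

/- ### Auxiliary lemmas -/

lemma sorted_getElem_le_iff {l : List ℝ} (hl : l.Pairwise (· ≤ ·)) {i : ℕ}
    (hi : i < l.length) (x : ℝ) :
    l[i] ≤ x ↔ i + 1 ≤ l.countP (fun a => decide (a ≤ x)) := by
  induction l generalizing i with
  | nil => simp at hi
  | cons a l ih =>
    rw [List.countP_cons]
    have hs := List.pairwise_cons.mp hl
    cases i with
    | zero =>
      simp only [List.getElem_cons_zero]
      by_cases hax : a ≤ x
      · simp [hax]
      · have h0 : l.countP (fun a => decide (a ≤ x)) = 0 := by
          rw [List.countP_eq_zero]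
          intro b hb
          simpa using not_le.mpr (lt_of_lt_of_le (not_le.mp hax) (hs.1 b hb))
        simp [hax, h0]
    | succ i =>
      simp only [List.getElem_cons_succ]
      by_cases hax : a ≤ x
      · rw [ih hs.2 (by simpa using hi)]
        simp [hax]
      · have h0 : l.countP (fun a => decide (a ≤ x)) = 0 := by
          rw [List.countP_eq_zero]
          intro b hb
          simpa using not_le.mpr (lt_of_lt_of_le (not_le.mp hax) (hs.1 b hb))
        have hi' : i < l.length := by simpa using hi
        have : ¬ (l[i]'hi') ≤ x :=
          not_le.mpr (lt_of_lt_of_le (not_le.mp hax) (hs.1 _ (l.getElem_mem _)))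
        simp [hax, h0, this]

lemma countP_le_of_rel (x : ℝ) {s t : Multiset ℝ} (h : Multiset.Rel (· ≤ ·) s t) :
    t.countP (fun a => a ≤ x) ≤ s.countP (fun a => a ≤ x) := by
  induction h with
  | zero => simp
  | @cons a b s t hab _ ih =>
    rw [Multiset.countP_cons, Multiset.countP_cons]
    by_cases hbx : b ≤ x
    · have hax : a ≤ x := le_trans hab hbx
      simp only [hax, hbx, if_pos]
      omega
    · simp only [hbx, if_neg, not_false_iff]
      split <;> omega

lemma med_le_med {n : ℕ} {s t : Multiset ℝ} (hs : Multiset.card s = 2 * n + 1)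
    (ht : Multiset.card t = 2 * n + 1) (h : Multiset.Rel (· ≤ ·) s t) :
    med n s ≤ med n t := by
  have hls : (s.sort (· ≤ ·)).length = 2 * n + 1 := by rw [Multiset.length_sort, hs]
  have hlt : (t.sort (· ≤ ·)).length = 2 * n + 1 := by rw [Multiset.length_sort, ht]
  have hns : n < (s.sort (· ≤ ·)).length := by omega
  have hnt : n < (t.sort (· ≤ ·)).length := by omega
  have hmeds : med n s = (s.sort (· ≤ ·))[n] := List.getD_eq_getElem _ _ hns
  have hmedt : med n t = (t.sort (· ≤ ·))[n] := List.getD_eq_getElem _ _ hnt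
  rw [hmeds, hmedt]
  set x := (t.sort (· ≤ ·))[n] with hx
  have hsort_s : (s.sort (· ≤ ·)).Pairwise (· ≤ ·) := Multiset.pairwise_sort _ _
  have hsort_t : (t.sort (· ≤ ·)).Pairwise (· ≤ ·) := Multiset.pairwise_sort _ _
  rw [sorted_getElem_le_iff hsort_s hns x]
  have h1 : n + 1 ≤ (t.sort (· ≤ ·)).countP (fun a => decide (a ≤ x)) :=
    (sorted_getElem_le_iff hsort_t hnt x).mp le_rfl
  have hcs : (s.sort (· ≤ ·)).countP (fun a => decide (a ≤ x))
      = s.countP (fun a => a ≤ x) := by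
    have := Multiset.coe_countP (p := fun a : ℝ => a ≤ x) (s.sort (· ≤ ·))
    rw [Multiset.sort_eq] at this
    exact this.symm
  have hct : (t.sort (· ≤ ·)).countP (fun a => decide (a ≤ x))
      = t.countP (fun a => a ≤ x) := by
    have := Multiset.coe_countP (p := fun a : ℝ => a ≤ x) (t.sort (· ≤ ·))
    rw [Multiset.sort_eq] at this
    exact this.symm
  rw [hcs]
  rw [hct] at h1
  exact le_trans h1 (countP_le_of_rel x h)

lemma projMed_mono (n : ℕ) (g h : ℕ → ℝ) (hgh : ∀ k ≤ n, g k ≤ h k)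
    (votes : Fin n → ℝ) : projMed n g votes ≤ projMed n h votes := by
  unfold projMed
  apply med_le_med
  · simp; omega
  · simp; omega
  · apply Multiset.Rel.add
    · rw [Multiset.rel_map]
      exact Multiset.rel_refl_of_refl_on fun k hk =>
        hgh k (Nat.lt_succ_iff.mp (Multiset.mem_range.mp hk))
    · exact Multiset.rel_refl_of_refl_on fun x _ => le_rfl

lemma output_le_output {n m : ℕ} (f : ℕ → ℝ → ℝ) (hf : IsPhantomSystem n f)
    (P : Fin n → Fin m → ℝ) {t₁ t₂ : ℝ} (h₁ : IsNormPoint f P t₁)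
    (h₂ : IsNormPoint f P t₂) (hle : t₁ ≤ t₂) (j : Fin m) :
    output f P t₁ j = output f P t₂ j := by
  have key : ∀ j' : Fin m, output f P t₁ j' ≤ output f P t₂ j' := by
    intro j'
    apply projMed_mono
    intro k hk
    exact hf.monotoneOn k hk h₁.1 h₂.1 hle
  have hsum : ∑ j', output f P t₁ j' = ∑ j', output f P t₂ j' := by
    rw [show (∑ j', output f P t₁ j') = 1 from h₁.2,
      show (∑ j', output f P t₂ j') = 1 from h₂.2]
  exact (Finset.sum_eq_sum_iff_of_le (fun i _ => key i)).mp hsum j (Finset.mem_univ j)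

/-- The output of a moving phantom mechanism is well defined:
any two normalization points yield the same medians. -/
theorem output_well_defined
    (n m : ℕ) (hn : 0 < n) (hm : 0 < m)
    (f : ℕ → ℝ → ℝ) (hf : IsPhantomSystem n f)
    (P : Fin n → Fin m → ℝ) (hP : IsProfile P)
    (t₁ t₂ : ℝ) (h₁ : IsNormPoint f P t₁) (h₂ : IsNormPoint f P t₂)
    (j : Fin m) :
    output f P t₁ j = output f P t₂ j := by
  rcases le_total t₁ t₂ with h | h
  · exact output_le_output f hf P h₁ h₂ h j
  · exact (output_le_output f hf P h₂ h₁ h j).symm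
end

section
/- Let n, m ≥ 1 and let F_n = {f_0,…,f_n} be a family of continuous, non-decreasing functions f_k : [0,1] → [0,1] with f_k(0) = 0 for each k, f_0(t) ≥ f_1(t) ≥ … ≥ f_n(t) for all t ∈ [0,1], and f_k(1) ≥ 1 − k/n for each k ∈ {0,…,n}. Then for every preference profile P on n voters and m projects there exists a normalization point t* ∈ [0,1], i.e., a point with Σ_{j=1}^m med(f_0(t*),…,f_n(t*),P_{1j},…,P_{nj}) = 1. -/
open Finset

open scoped Classical

/-! ### Auxiliary lemmas -/

lemma aux_mem_take {l : List ℝ} (hl : l.Pairwise (· ≤ ·)) {k : ℕ} (hk : k < l.length)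
    {y : ℝ} (hy : y ∈ l.take (k + 1)) : y ≤ l[k] := by
  obtain ⟨i, hi, rfl⟩ := List.getElem_of_mem hy
  have hi' : i ≤ k := by
    have := hi
    simp only [List.length_take] at this
    omega
  rw [List.getElem_take]
  have := hl.rel_get_of_le (a := ⟨i, by omega⟩) (b := ⟨k, hk⟩) (by exact_mod_cast hi')
  simpa using this

lemma aux_mem_drop {l : List ℝ} (hl : l.Pairwise (· ≤ ·)) {k : ℕ} (hk : k < l.length)
    {y : ℝ} (hy : y ∈ l.drop k) : l[k] ≤ y := by
  obtain ⟨i, hi, rfl⟩ := List.getElem_of_mem hy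
  rw [List.getElem_drop]
  have hki : k ≤ k + i := Nat.le_add_right _ _
  have := hl.rel_get_of_le (a := ⟨k, hk⟩)
    (b := ⟨k + i, by have := hi; simp only [List.length_drop] at this; omega⟩)
    (by exact_mod_cast hki)
  simpa using this

section medLemmas

variable {n : ℕ} {s : Multiset ℝ}

lemma med_sort_eq (hs : Multiset.card s = 2 * n + 1) :
    ∃ (l : List ℝ) (_ : n < l.length), l.Pairwise (· ≤ ·) ∧ l.length = 2 * n + 1 ∧
      (s : Multiset ℝ) = ↑l ∧ med n s = l[n] := by
  refine ⟨s.sort (· ≤ ·), ?_, s.pairwise_sort _, ?_, (s.sort_eq _).symm, ?_⟩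
  · rw [Multiset.length_sort, hs]; omega
  · rw [Multiset.length_sort, hs]
  · rw [med, List.getD_eq_getElem]

lemma med_le_of_countP (hs : Multiset.card s = 2 * n + 1) {x : ℝ}
    (h : n + 1 ≤ s.countP (fun y => y ≤ x)) : med n s ≤ x := by
  obtain ⟨l, hnl, hsort, hlen, hsl, hmed⟩ := med_sort_eq hs
  rw [hmed]
  by_contra hc
  push_neg at hc
  have hcnt : s.countP (fun y => y ≤ x) = l.countP (fun y => decide (y ≤ x)) := by
    rw [hsl]; rfl
  rw [hcnt, ← List.take_append_drop n l, List.countP_append] at h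
  have h1 : (l.take n).countP (fun y => decide (y ≤ x)) ≤ n := by
    calc (l.take n).countP (fun y => decide (y ≤ x)) ≤ (l.take n).length :=
          List.countP_le_length
      _ ≤ n := by simp [List.length_take]
  have h2 : (l.drop n).countP (fun y => decide (y ≤ x)) = 0 := by
    rw [List.countP_eq_zero]
    intro y hy
    have := aux_mem_drop hsort hnl hy
    simp only [decide_eq_true_eq]
    intro hyx
    linarith
  omega

lemma le_med_of_countP (hs : Multiset.card s = 2 * n + 1) {x : ℝ}
    (h : n + 1 ≤ s.countP (fun y => x ≤ y)) : x ≤ med n s := by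
  obtain ⟨l, hnl, hsort, hlen, hsl, hmed⟩ := med_sort_eq hs
  rw [hmed]
  by_contra hc
  push_neg at hc
  have hcnt : s.countP (fun y => x ≤ y) = l.countP (fun y => decide (x ≤ y)) := by
    rw [hsl]; rfl
  rw [hcnt, ← List.take_append_drop (n + 1) l, List.countP_append] at h
  have h1 : (l.take (n + 1)).countP (fun y => decide (x ≤ y)) = 0 := by
    rw [List.countP_eq_zero]
    intro y hy
    have := aux_mem_take hsort hnl hy
    simp only [decide_eq_true_eq]
    intro hyx
    linarith
  have h2 : (l.drop (n + 1)).countP (fun y => decide (x ≤ y)) ≤ n := by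
    calc (l.drop (n + 1)).countP (fun y => decide (x ≤ y)) ≤ (l.drop (n + 1)).length :=
          List.countP_le_length
      _ ≤ n := by simp [List.length_drop]; omega
  omega

lemma countP_le_med (hs : Multiset.card s = 2 * n + 1) :
    n + 1 ≤ s.countP (fun y => y ≤ med n s) := by
  obtain ⟨l, hnl, hsort, hlen, hsl, hmed⟩ := med_sort_eq hs
  have hcnt : s.countP (fun y => y ≤ med n s) = l.countP (fun y => decide (y ≤ med n s)) := by
    rw [hsl]; rfl
  rw [hcnt, ← List.take_append_drop (n + 1) l, List.countP_append]
  have h1 : (l.take (n + 1)).countP (fun y => decide (y ≤ med n s)) = (l.take (n + 1)).length := by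
    rw [List.countP_eq_length]
    intro y hy
    simp only [decide_eq_true_eq, hmed]
    exact aux_mem_take hsort hnl hy
  have : (l.take (n + 1)).length = n + 1 := by simp [List.length_take]; omega
  omega

lemma countP_lt_med (hs : Multiset.card s = 2 * n + 1) :
    s.countP (fun y => med n s < y) ≤ n := by
  obtain ⟨l, hnl, hsort, hlen, hsl, hmed⟩ := med_sort_eq hs
  have hcnt : s.countP (fun y => med n s < y) = l.countP (fun y => decide (med n s < y)) := by
    rw [hsl]; rfl
  rw [hcnt, ← List.take_append_drop (n + 1) l, List.countP_append]
  have h1 : (l.take (n + 1)).countP (fun y => decide (med n s < y)) = 0 := by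
    rw [List.countP_eq_zero]
    intro y hy
    have := aux_mem_take hsort hnl hy
    simp only [decide_eq_true_eq, hmed]
    intro hyx
    linarith
  have h2 : (l.drop (n + 1)).countP (fun y => decide (med n s < y)) ≤ n := by
    calc (l.drop (n + 1)).countP (fun y => decide (med n s < y)) ≤ (l.drop (n + 1)).length :=
          List.countP_le_length
      _ ≤ n := by simp [List.length_drop]; omega
  omega

end medLemmas

/-- The multiset underlying `projMed`. -/
noncomputable def projMS (n : ℕ) (ph : ℕ → ℝ) (v : Fin n → ℝ) : Multiset ℝ :=
  (Multiset.range (n + 1)).map ph + Finset.univ.val.map v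

lemma projMed_eq (n : ℕ) (ph : ℕ → ℝ) (v : Fin n → ℝ) :
    projMed n ph v = med n (projMS n ph v) := rfl

lemma card_projMS (n : ℕ) (ph : ℕ → ℝ) (v : Fin n → ℝ) :
    Multiset.card (projMS n ph v) = 2 * n + 1 := by
  simp [projMS]
  omega

lemma countP_projMS (n : ℕ) (ph : ℕ → ℝ) (v : Fin n → ℝ) (p : ℝ → Prop) [DecidablePred p] :
    (projMS n ph v).countP p =
      ((Finset.range (n + 1)).filter (fun k => p (ph k))).card
        + (Finset.univ.filter (fun i => p (v i))).card := by
  rw [projMS, Multiset.countP_add, Multiset.countP_map, Multiset.countP_map,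
    ← Finset.range_val]
  rfl
open scoped Classical in
lemma projMed_le_add {n : ℕ} (g g' : ℕ → ℝ) (v : Fin n → ℝ) {ε : ℝ} (hε : 0 ≤ ε)
    (h : ∀ k ≤ n, g k ≤ g' k + ε) : projMed n g v ≤ projMed n g' v + ε := by
  rw [projMed_eq n g v, projMed_eq n g' v]
  apply med_le_of_countP (card_projMS n g v)
  rw [countP_projMS]
  have h1 := countP_le_med (card_projMS n g' v)
  rw [countP_projMS] at h1
  set x := med n (projMS n g' v) with hx
  have hsub1 : (Finset.range (n + 1)).filter (fun k => g' k ≤ x) ⊆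
      (Finset.range (n + 1)).filter (fun k => g k ≤ x + ε) := by
    intro k hk
    rw [Finset.mem_filter] at hk ⊢
    refine ⟨hk.1, ?_⟩
    have hkn : k ≤ n := by have := Finset.mem_range.mp hk.1; omega
    linarith [h k hkn, hk.2]
  have hsub2 : Finset.univ.filter (fun i => v i ≤ x) ⊆
      Finset.univ.filter (fun i => v i ≤ x + ε) := by
    intro i hi
    rw [Finset.mem_filter] at hi ⊢
    exact ⟨hi.1, by linarith [hi.2]⟩
  have := add_le_add (Finset.card_le_card hsub1) (Finset.card_le_card hsub2)
  omega

lemma abs_projMed_sub_le {n : ℕ} (g g' : ℕ → ℝ) (v : Fin n → ℝ) {ε : ℝ} (hε : 0 ≤ ε)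
    (h : ∀ k ≤ n, |g k - g' k| ≤ ε) : |projMed n g v - projMed n g' v| ≤ ε := by
  rw [abs_sub_le_iff]
  constructor
  · have := projMed_le_add g g' v hε (fun k hk => by linarith [(abs_le.mp (h k hk)).2,
      (abs_le.mp (h k hk)).1])
    linarith
  · have := projMed_le_add g' g v hε (fun k hk => by linarith [(abs_le.mp (h k hk)).1])
    linarith

lemma projMed_continuousOn {n : ℕ} (f : ℕ → ℝ → ℝ) (v : Fin n → ℝ)
    (hcont : ∀ k ≤ n, ContinuousOn (f k) (Set.Icc 0 1)) :
    ContinuousOn (fun t => projMed n (fun k => f k t) v) (Set.Icc 0 1) := by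
  intro t0 ht0
  rw [ContinuousWithinAt, Metric.tendsto_nhds]
  intro ε hε
  have hev : ∀ k ∈ Finset.range (n + 1), ∀ᶠ t in nhdsWithin t0 (Set.Icc 0 1),
      dist (f k t) (f k t0) < ε / 2 := by
    intro k hk
    have hk' : k ≤ n := by have := Finset.mem_range.mp hk; omega
    have hcw := (hcont k hk') t0 ht0
    rw [ContinuousWithinAt] at hcw
    exact (Metric.tendsto_nhds.mp hcw) (ε / 2) (by linarith)
  have hall := (Finset.range (n + 1)).eventually_all.mpr hev
  filter_upwards [hall] with t ht
  have hb : |projMed n (fun k => f k t) v - projMed n (fun k => f k t0) v| ≤ ε / 2 := by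
    apply abs_projMed_sub_le _ _ _ (by linarith)
    intro k hk
    have := ht k (Finset.mem_range.mpr (by omega))
    rw [Real.dist_eq] at this
    exact this.le
  rw [Real.dist_eq]
  linarith [hb]

open scoped Classical in
lemma projMed_eq_zero {n : ℕ} (ph : ℕ → ℝ) (v : Fin n → ℝ)
    (hph : ∀ k ≤ n, ph k = 0) (hv : ∀ i, 0 ≤ v i) : projMed n ph v = 0 := by
  rw [projMed_eq]
  have hcard := card_projMS n ph v
  have hrange : ∀ k ∈ Finset.range (n + 1), ph k = 0 := fun k hk =>
    hph k (by have := Finset.mem_range.mp hk; omega)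
  have h1 : med n (projMS n ph v) ≤ 0 := by
    apply med_le_of_countP hcard
    rw [countP_projMS]
    have heq : (Finset.range (n + 1)).filter (fun k => ph k ≤ 0) = Finset.range (n + 1) :=
      Finset.filter_true_of_mem (fun k hk => by rw [hrange k hk])
    rw [heq, Finset.card_range]
    omega
  have h2 : 0 ≤ med n (projMS n ph v) := by
    apply le_med_of_countP hcard
    rw [countP_projMS]
    have heq : (Finset.range (n + 1)).filter (fun k => 0 ≤ ph k) = Finset.range (n + 1) :=
      Finset.filter_true_of_mem (fun k hk => by rw [hrange k hk])
    rw [heq, Finset.card_range]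
    omega
  linarith

open scoped Classical in
lemma one_le_sum_projMed {n m : ℕ} (hn0 : 0 < n) (f1 : ℕ → ℝ) (P : Fin n → Fin m → ℝ)
    (hone : ∀ k ≤ n, 1 - (k : ℝ) / (n : ℝ) ≤ f1 k)
    (hf01 : ∀ k ≤ n, f1 k ∈ Set.Icc (0 : ℝ) 1)
    (hP : IsProfile P) :
    1 ≤ ∑ j, projMed n f1 (fun i => P i j) := by
  have hnR : (0 : ℝ) < (n : ℝ) := by exact_mod_cast hn0
  set c : Fin m → ℝ := fun j => projMed n f1 (fun i => P i j) with hc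
  by_contra hlt
  push_neg at hlt
  have hc0 : ∀ j, 0 ≤ c j := by
    intro j
    apply le_med_of_countP (card_projMS n f1 (fun i => P i j))
    rw [countP_projMS]
    have h1 : (Finset.range (n + 1)).filter (fun k => 0 ≤ f1 k) = Finset.range (n + 1) :=
      Finset.filter_true_of_mem (fun k hk =>
        (hf01 k (by have := Finset.mem_range.mp hk; omega)).1)
    have h2 : Finset.univ.filter (fun i => 0 ≤ P i j) = Finset.univ :=
      Finset.filter_true_of_mem (fun i _ => (hP.1 i j).1)
    rw [h1, h2, Finset.card_range]
    omega
  have key : ∀ j, ((Finset.univ.filter (fun i => c j < P i j)).card : ℝ) ≤ (n : ℝ) * c j := by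
    intro j
    by_cases h1c : 1 ≤ c j
    · calc ((Finset.univ.filter (fun i => c j < P i j)).card : ℝ)
          ≤ ((Finset.univ : Finset (Fin n)).card : ℝ) := by
            exact_mod_cast Finset.card_filter_le _ _
        _ = (n : ℝ) := by simp
        _ ≤ (n : ℝ) * c j := le_mul_of_one_le_right hnR.le h1c
    · push_neg at h1c
      set x : ℝ := (n : ℝ) * (1 - c j) with hxdef
      have hx0 : 0 < x := mul_pos hnR (by linarith)
      have hxn : x ≤ (n : ℝ) := by nlinarith [hc0 j]
      have hceil : ⌈x⌉₊ ≤ n := Nat.ceil_le.mpr hxn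
      have hMsub : Finset.range ⌈x⌉₊ ⊆
          (Finset.range (n + 1)).filter (fun k => c j < f1 k) := by
        intro k hk
        rw [Finset.mem_range] at hk
        have hkx : (k : ℝ) < x := Nat.lt_ceil.mp hk
        have hkn : k ≤ n := by omega
        refine Finset.mem_filter.mpr ⟨Finset.mem_range.mpr (by omega), ?_⟩
        have hf := hone k hkn
        have hck : c j < 1 - (k : ℝ) / (n : ℝ) := by
          have hdiv : (k : ℝ) / (n : ℝ) < 1 - c j := by
            rw [div_lt_iff₀ hnR]
            nlinarith
          linarith
        linarith
      have hM : x ≤ (((Finset.range (n + 1)).filter (fun k => c j < f1 k)).card : ℝ) := by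
        have hcc := Finset.card_le_card hMsub
        rw [Finset.card_range] at hcc
        calc x ≤ (⌈x⌉₊ : ℝ) := Nat.le_ceil x
          _ ≤ _ := by exact_mod_cast hcc
      have htot : ((Finset.range (n + 1)).filter (fun k => c j < f1 k)).card
          + (Finset.univ.filter (fun i => c j < P i j)).card ≤ n := by
        have hcp := countP_lt_med (card_projMS n f1 (fun i => P i j))
        rw [countP_projMS] at hcp
        exact hcp
      have htotR : (((Finset.range (n + 1)).filter (fun k => c j < f1 k)).card : ℝ)
          + ((Finset.univ.filter (fun i => c j < P i j)).card : ℝ) ≤ (n : ℝ) := by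
        exact_mod_cast htot
      have : ((Finset.univ.filter (fun i => c j < P i j)).card : ℝ) ≤ (n : ℝ) - x := by
        linarith
      calc ((Finset.univ.filter (fun i => c j < P i j)).card : ℝ) ≤ (n : ℝ) - x := this
        _ = (n : ℝ) * c j := by rw [hxdef]; ring
  have hvoter : ∀ i, ∃ j, c j < P i j := by
    intro i
    by_contra hno
    push_neg at hno
    have h1 := hP.2 i
    have hle : (1 : ℝ) ≤ ∑ j, c j := by
      rw [← h1]
      exact Finset.sum_le_sum (fun j _ => hno j)
    linarith
  have hsum : (n : ℝ) ≤ ∑ j, ((Finset.univ.filter (fun i => c j < P i j)).card : ℝ) := by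
    have hite : ∀ j : Fin m, ((Finset.univ.filter (fun i => c j < P i j)).card : ℝ)
        = ∑ i, if c j < P i j then (1 : ℝ) else 0 := fun j =>
      Finset.natCast_card_filter _ _
    rw [Finset.sum_congr rfl (fun j _ => hite j), Finset.sum_comm]
    calc (n : ℝ) = ∑ _i : Fin n, (1 : ℝ) := by simp
      _ ≤ ∑ i, ∑ j, (if c j < P i j then (1 : ℝ) else 0) := by
          apply Finset.sum_le_sum
          intro i _
          obtain ⟨j, hj⟩ := hvoter i
          calc (1 : ℝ) = if c j < P i j then (1 : ℝ) else 0 := by rw [if_pos hj]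
            _ ≤ ∑ j, (if c j < P i j then (1 : ℝ) else 0) :=
              Finset.single_le_sum (f := fun j => if c j < P i j then (1 : ℝ) else 0)
                (fun j _ => by split <;> norm_num) (Finset.mem_univ j)
  have hfin : ∑ j, ((Finset.univ.filter (fun i => c j < P i j)).card : ℝ)
      ≤ (n : ℝ) * ∑ j, c j := by
    rw [Finset.mul_sum]
    exact Finset.sum_le_sum (fun j _ => key j)
  nlinarith

/-- If `f_k(1) ≥ 1 - k/n` for all `k`, then every profile has a
normalization point. -/
theorem norm_point_exists
    (n m : ℕ) (hn : 0 < n) (hm : 0 < m)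
    (f : ℕ → ℝ → ℝ)
    (hcont : ∀ k ≤ n, ContinuousOn (f k) (Set.Icc 0 1))
    (hmono : ∀ k ≤ n, MonotoneOn (f k) (Set.Icc 0 1))
    (hmem : ∀ k ≤ n, ∀ t ∈ Set.Icc (0 : ℝ) 1, f k t ∈ Set.Icc (0 : ℝ) 1)
    (hzero : ∀ k ≤ n, f k 0 = 0)
    (hord : ∀ k l : ℕ, k ≤ l → l ≤ n → ∀ t ∈ Set.Icc (0 : ℝ) 1, f l t ≤ f k t)
    (hone : ∀ k ≤ n, 1 - (k : ℝ) / (n : ℝ) ≤ f k 1)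
    (P : Fin n → Fin m → ℝ) (hP : IsProfile P) :
    ∃ t, IsNormPoint f P t := by
    classical
  have hg0 : (fun t => ∑ j, projMed n (fun k => f k t) (fun i => P i j)) 0 = 0 := by
    apply Finset.sum_eq_zero
    intro j _
    exact projMed_eq_zero _ _ (fun k hk => hzero k hk) (fun i => (hP.1 i j).1)
  have hg1 : 1 ≤ (fun t => ∑ j, projMed n (fun k => f k t) (fun i => P i j)) 1 := by
    apply one_le_sum_projMed hn (fun k => f k 1) P hone
      (fun k hk => hmem k hk 1 ⟨zero_le_one, le_refl 1⟩) hP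
  have hcontg : ContinuousOn (fun t => ∑ j, projMed n (fun k => f k t) (fun i => P i j))
      (Set.Icc 0 1) := by
    apply continuousOn_finset_sum
    intro j _
    exact projMed_continuousOn f (fun i => P i j) hcont
  have h1mem : (1 : ℝ) ∈ Set.Icc ((fun t => ∑ j, projMed n (fun k => f k t) (fun i => P i j)) 0)
      ((fun t => ∑ j, projMed n (fun k => f k t) (fun i => P i j)) 1) := by
    rw [hg0]
    exact ⟨zero_le_one, hg1⟩
  obtain ⟨t, ht, hgt⟩ := intermediate_value_Icc zero_le_one hcontg h1mem
  exact ⟨t, ht, hgt⟩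
end
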